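/- arXiv:math/0111230 — 6 statements merged into one kernel-verified Lean document; each statement's English description precedes it below -/
import Mathlib

section
/- With γ(p^{1/2} z) = (1-qz)(1-t^{-1}z)/((1-z)(1-pz)) and f^{i,j}(z) defined via the exponential formula with parameters q, t, p = q t^{-1}, N, the fusion identity f^{1,j}(p^{(i+1)/2} z) · f^{i,j}(z) = f^{i+1,j}(p^{1/2} z) holds for all integers 1 ≤ i < j ≤ N-1, as an identity of formal power series in z. -/
open PowerSeries

/-- Exponential of a formal power series (meaningful when the constant term is zero). -/
noncomputable def pexp {K : Type*} [Field K] (S : PowerSeries K) : PowerSeries K :=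
  PowerSeries.mk fun n => ∑ k ∈ Finset.range (n + 1),
    PowerSeries.coeff n (S ^ k) / (Nat.factorial k : K)

lemma coeff_pow_eq_zero {K : Type*} [Field K] {S : PowerSeries K}
    (hS : constantCoeff S = 0) {n k : ℕ} (h : n < k) : coeff n (S ^ k) = 0 := by
  have hd : (X : PowerSeries K) ^ k ∣ S ^ k :=
    pow_dvd_pow_of_dvd (X_dvd_iff.mpr hS) k
  exact (X_pow_dvd_iff.mp hd) n h

lemma pexp_rescale {K : Type*} [Field K] (a : K) (S : PowerSeries K) :
    rescale a (pexp S) = pexp (rescale a S) := by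
  ext n
  simp only [pexp, coeff_rescale, coeff_mk, Finset.mul_sum, ← map_pow, mul_div_assoc]

lemma sum_conv {K : Type*} [Field K] (n a b : ℕ) (hab : a + b = n) (F G : ℕ → K)
    (hF : ∀ m, a < m → F m = 0) (hG : ∀ l, b < l → G l = 0) :
    ∑ k ∈ Finset.range (n + 1), ∑ m ∈ Finset.range (k + 1), F m * G (k - m)
      = (∑ m ∈ Finset.range (n + 1), F m) * (∑ l ∈ Finset.range (n + 1), G l) := by
  have hz : ∀ p : ℕ × ℕ, n < p.1 + p.2 ∨ n < p.1 ∨ n < p.2 → F p.1 * G p.2 = 0 := by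
    rintro ⟨x, y⟩ h
    rcases Nat.lt_or_ge a x with hx | hx
    · rw [hF x hx, zero_mul]
    · rcases Nat.lt_or_ge b y with hy | hy
      · rw [hG y hy, mul_zero]
      · exfalso; omega
  calc ∑ k ∈ Finset.range (n + 1), ∑ m ∈ Finset.range (k + 1), F m * G (k - m)
      = ∑ k ∈ Finset.range (n + 1), ∑ p ∈ Finset.HasAntidiagonal.antidiagonal k, F p.1 * G p.2 := by
        refine Finset.sum_congr rfl fun k _ => ?_
        rw [Finset.Nat.sum_antidiagonal_eq_sum_range_succ (fun x y => F x * G y)]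
    _ = ∑ k ∈ Finset.range (2 * n + 1), ∑ p ∈ Finset.HasAntidiagonal.antidiagonal k, F p.1 * G p.2 := by
        refine Finset.sum_subset (Finset.range_subset_range.mpr (by omega : n + 1 ≤ 2 * n + 1)) fun k _ hk => ?_
        refine Finset.sum_eq_zero fun p hp => ?_
        rw [Finset.HasAntidiagonal.mem_antidiagonal] at hp
        rw [Finset.mem_range, not_lt] at hk
        exact hz p (Or.inl (by omega))
    _ = ∑ k ∈ Finset.range (2 * n + 1),
          ∑ p ∈ (Finset.range (n + 1) ×ˢ Finset.range (n + 1)).filter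
            (fun p => p.1 + p.2 = k), F p.1 * G p.2 := by
        refine Finset.sum_congr rfl fun k _ => ?_
        refine (Finset.sum_subset ?_ fun p hp hp' => ?_).symm
        · intro p hp
          rw [Finset.mem_filter] at hp
          rw [Finset.HasAntidiagonal.mem_antidiagonal]
          exact hp.2
        · rw [Finset.HasAntidiagonal.mem_antidiagonal] at hp
          rw [Finset.mem_filter, Finset.mem_product, Finset.mem_range, Finset.mem_range] at hp'
          refine hz p ?_
          by_contra hcon
          push_neg at hcon
          exact hp' ⟨⟨by omega, by omega⟩, hp⟩
    _ = ∑ p ∈ Finset.range (n + 1) ×ˢ Finset.range (n + 1), F p.1 * G p.2 := by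
        refine Finset.sum_fiberwise_of_maps_to (fun p hp => ?_) _
        rw [Finset.mem_product, Finset.mem_range, Finset.mem_range] at hp
        rw [Finset.mem_range]; omega
    _ = (∑ m ∈ Finset.range (n + 1), F m) * (∑ l ∈ Finset.range (n + 1), G l) := by
        rw [Finset.sum_product, Finset.sum_mul]
        exact Finset.sum_congr rfl fun m _ => by rw [Finset.mul_sum]

lemma pexp_mul {K : Type*} [Field K] [CharZero K] (S T : PowerSeries K)
    (hS : constantCoeff S = 0) (hT : constantCoeff T = 0) :
    pexp (S + T) = pexp S * pexp T := by
  ext n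
  rw [coeff_mul]
  simp only [pexp, coeff_mk]
  have L : ∀ k, (coeff n) ((S + T) ^ k)
      = ∑ m ∈ Finset.range (k + 1), ∑ p ∈ Finset.HasAntidiagonal.antidiagonal n,
          coeff p.1 (S ^ m) * coeff p.2 (T ^ (k - m)) * (k.choose m : K) := by
    intro k
    rw [add_pow, map_sum]
    refine Finset.sum_congr rfl fun m _ => ?_
    have hc : ((k.choose m : ℕ) : PowerSeries K) = C ((k.choose m : ℕ) : K) := by
      rw [map_natCast]
    rw [hc, coeff_mul_C, coeff_mul, Finset.sum_mul]
  calc ∑ k ∈ Finset.range (n + 1), (coeff n) ((S + T) ^ k) / (k.factorial : K)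
      = ∑ k ∈ Finset.range (n + 1), ∑ m ∈ Finset.range (k + 1),
          ∑ p ∈ Finset.HasAntidiagonal.antidiagonal n,
          (coeff p.1 (S ^ m) / (m.factorial : K)) *
            (coeff p.2 (T ^ (k - m)) / ((k - m).factorial : K)) := by
        refine Finset.sum_congr rfl fun k _ => ?_
        rw [L k, Finset.sum_div]
        refine Finset.sum_congr rfl fun m hm => ?_
        rw [Finset.sum_div]
        refine Finset.sum_congr rfl fun p _ => ?_
        rw [Finset.mem_range] at hm
        have hmk : m ≤ k := by omega
        rw [Nat.cast_choose K hmk]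
        have h1 : (m.factorial : K) ≠ 0 := Nat.cast_ne_zero.mpr m.factorial_ne_zero
        have h2 : ((k - m).factorial : K) ≠ 0 := Nat.cast_ne_zero.mpr (k - m).factorial_ne_zero
        have h3 : (k.factorial : K) ≠ 0 := Nat.cast_ne_zero.mpr k.factorial_ne_zero
        field_simp
    _ = ∑ p ∈ Finset.HasAntidiagonal.antidiagonal n, ∑ k ∈ Finset.range (n + 1),
          ∑ m ∈ Finset.range (k + 1),
          (coeff p.1 (S ^ m) / (m.factorial : K)) *
            (coeff p.2 (T ^ (k - m)) / ((k - m).factorial : K)) := by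
        rw [Finset.sum_comm]
        refine Finset.sum_congr rfl fun p _ => Finset.sum_comm
    _ = ∑ p ∈ Finset.HasAntidiagonal.antidiagonal n,
          (∑ k ∈ Finset.range (p.1 + 1), coeff p.1 (S ^ k) / (k.factorial : K)) *
            (∑ l ∈ Finset.range (p.2 + 1), coeff p.2 (T ^ l) / (l.factorial : K)) := by
        refine Finset.sum_congr rfl fun p hp => ?_
        rw [Finset.HasAntidiagonal.mem_antidiagonal] at hp
        rw [sum_conv n p.1 p.2 hp
          (fun m => coeff p.1 (S ^ m) / (m.factorial : K))
          (fun l => coeff p.2 (T ^ l) / (l.factorial : K))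
          (fun m hm => by beta_reduce; rw [coeff_pow_eq_zero hS hm, zero_div])
          (fun l hl => by beta_reduce; rw [coeff_pow_eq_zero hT hl, zero_div])]
        congr 1
        · exact (Finset.sum_subset (Finset.range_subset_range.mpr (by omega : p.1 + 1 ≤ n + 1))
            fun k _ hk => by
              rw [coeff_pow_eq_zero hS (by simpa using hk : p.1 < k), zero_div]).symm
        · exact (Finset.sum_subset (Finset.range_subset_range.mpr (by omega : p.2 + 1 ≤ n + 1))
            fun l _ hl => by
              rw [coeff_pow_eq_zero hT (by simpa using hl : p.2 < l), zero_div]).symm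

/-- The structure function `f^{i,j}(z)` of the deformed `W_N` algebra,
with `p = q t⁻¹` and `sp` a square root of `p` (so `p^{1/2} = sp`). -/
noncomputable def fser {K : Type*} [Field K] (q t sp : K) (N i j : ℤ) : PowerSeries K :=
  pexp (PowerSeries.mk fun n => if n = 0 then 0 else
    (1 / (n : K)) * (1 - q ^ (n : ℤ)) * (1 - t ^ (-(n : ℤ))) *
      ((1 - (q * t⁻¹) ^ (min i j * (n : ℤ))) / (1 - (q * t⁻¹) ^ (n : ℤ))) *
      ((1 - (q * t⁻¹) ^ ((N - max i j) * (n : ℤ))) / (1 - (q * t⁻¹) ^ (N * (n : ℤ)))) *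
      sp ^ (|i - j| * (n : ℤ)))

/-- The geometric series `1/(1 - c z) = ∑_{n ≥ 0} c^n z^n`. -/
noncomputable def geom {K : Type*} [Field K] (c : K) : PowerSeries K :=
  PowerSeries.mk fun n => c ^ n

/-- `γ(p^{1/2}·(a z)) = (1 - q a z)(1 - t⁻¹ a z)/((1 - a z)(1 - p a z))`,
expanded as a formal power series in `z` (geometric series for the denominators);
here `p = sp^2`. -/
noncomputable def gammaSer {K : Type*} [Field K] (q t sp a : K) : PowerSeries K :=
  (1 - PowerSeries.C (q * a) * PowerSeries.X) *
    (1 - PowerSeries.C (t⁻¹ * a) * PowerSeries.X) * geom a * geom (sp ^ 2 * a)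

/-- Fusion identity: `f^{1,j}(p^{(i+1)/2} z) · f^{i,j}(z) = f^{i+1,j}(p^{1/2} z)`
for `1 ≤ i < j ≤ N-1`. -/
theorem fser_fusion_plus {K : Type*} [Field K] [CharZero K] (q t sp : K) (N : ℤ) (hN : 2 ≤ N)
    (hq : q ≠ 0) (ht : t ≠ 0) (hsp : sp ^ 2 = q * t⁻¹)
    (hp : ∀ n : ℤ, n ≠ 0 → (q * t⁻¹) ^ n ≠ 1)
    (i j : ℤ) (hi : 1 ≤ i) (hij : i < j) (hj : j ≤ N - 1) :
    PowerSeries.rescale (sp ^ (i + 1)) (fser q t sp N 1 j) * fser q t sp N i j =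
      PowerSeries.rescale sp (fser q t sp N (i + 1) j) := by
  have hP : (q * t⁻¹ : K) ≠ 0 := mul_ne_zero hq (inv_ne_zero ht)
  have hsp0 : sp ≠ 0 := by
    intro h
    rw [h] at hsp
    exact hP (by simpa using hsp.symm)
  have hc0 : ∀ (i j : ℤ) (a : K), constantCoeff (rescale a
      (PowerSeries.mk fun n => if n = 0 then 0 else
        (1 / (n : K)) * (1 - q ^ (n : ℤ)) * (1 - t ^ (-(n : ℤ))) *
          ((1 - (q * t⁻¹) ^ (min i j * (n : ℤ))) / (1 - (q * t⁻¹) ^ (n : ℤ))) *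
          ((1 - (q * t⁻¹) ^ ((N - max i j) * (n : ℤ))) / (1 - (q * t⁻¹) ^ (N * (n : ℤ)))) *
          sp ^ (|i - j| * (n : ℤ)))) = 0 := by
    intro i j a
    rw [← coeff_zero_eq_constantCoeff_apply, coeff_rescale, coeff_mk]
    simp
  have hc1 : ∀ (i j : ℤ), constantCoeff
      (PowerSeries.mk fun n => if n = 0 then 0 else
        (1 / (n : K)) * (1 - q ^ (n : ℤ)) * (1 - t ^ (-(n : ℤ))) *
          ((1 - (q * t⁻¹) ^ (min i j * (n : ℤ))) / (1 - (q * t⁻¹) ^ (n : ℤ))) *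
          ((1 - (q * t⁻¹) ^ ((N - max i j) * (n : ℤ))) / (1 - (q * t⁻¹) ^ (N * (n : ℤ)))) *
          sp ^ (|i - j| * (n : ℤ))) = 0 := by
    intro i j
    rw [← coeff_zero_eq_constantCoeff_apply, coeff_mk]
    simp
  unfold fser
  rw [pexp_rescale, pexp_rescale, ← pexp_mul _ _ (hc0 1 j _) (hc1 i j)]
  refine congrArg pexp ?_
  ext n
  simp only [map_add, coeff_rescale, coeff_mk]
  rcases Nat.eq_zero_or_pos n with hn | hn
  · subst hn; simp
  · have hn0 : n ≠ 0 := hn.ne'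
    rw [if_neg hn0, if_neg hn0, if_neg hn0]
    have hzn : ((n : ℤ)) ≠ 0 := Int.natCast_ne_zero.mpr hn0
    rw [min_eq_left (by omega : (1:ℤ) ≤ j), max_eq_right (by omega : (1:ℤ) ≤ j),
        min_eq_left hij.le, max_eq_right hij.le,
        min_eq_left (by omega : i + 1 ≤ j), max_eq_right (by omega : i + 1 ≤ j),
        abs_sub_comm (1:ℤ) j, abs_of_nonneg (by omega : (0:ℤ) ≤ j - 1),
        abs_sub_comm i j, abs_of_nonneg (by omega : (0:ℤ) ≤ j - i),
        abs_sub_comm (i+1) j, abs_of_nonneg (by omega : (0:ℤ) ≤ j - (i + 1))]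
    rw [one_mul]
    have e1 : (sp ^ (i + 1)) ^ n = sp ^ ((i + 1) * (n:ℤ)) := by
      rw [← zpow_natCast (sp ^ (i + 1)) n, ← zpow_mul]
    have e2 : sp ^ n = sp ^ ((n:ℤ)) := (zpow_natCast sp n).symm
    have e3 : (q * t⁻¹) ^ ((i + 1) * (n:ℤ)) = (q * t⁻¹) ^ (i * (n:ℤ)) * (q * t⁻¹) ^ ((n:ℤ)) := by
      rw [← zpow_add₀ hP]; congr 1; ring
    have R1 : sp ^ ((i + 1) * (n:ℤ)) * sp ^ ((j - 1) * (n:ℤ))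
        = sp ^ ((j - i) * (n:ℤ)) * (q * t⁻¹) ^ (i * (n:ℤ)) := by
      rw [← hsp, ← zpow_natCast sp 2, ← zpow_mul, ← zpow_add₀ hsp0, ← zpow_add₀ hsp0]
      congr 1; push_cast; ring
    have R2 : sp ^ ((n:ℤ)) * sp ^ ((j - (i + 1)) * (n:ℤ)) = sp ^ ((j - i) * (n:ℤ)) := by
      rw [← zpow_add₀ hsp0]; congr 1; ring
    rw [e1, e2, e3]
    linear_combination
      (1 / (n:K) * (1 - q ^ ((n:ℤ))) * (1 - t ^ (-(n:ℤ))) *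
        ((1 - (q * t⁻¹) ^ ((n:ℤ))) / (1 - (q * t⁻¹) ^ ((n:ℤ)))) *
        ((1 - (q * t⁻¹) ^ ((N - j) * (n:ℤ))) / (1 - (q * t⁻¹) ^ (N * (n:ℤ))))) * R1
      - (1 / (n:K) * (1 - q ^ ((n:ℤ))) * (1 - t ^ (-(n:ℤ))) *
        ((1 - (q * t⁻¹) ^ (i * (n:ℤ)) * (q * t⁻¹) ^ ((n:ℤ))) / (1 - (q * t⁻¹) ^ ((n:ℤ)))) *
        ((1 - (q * t⁻¹) ^ ((N - j) * (n:ℤ))) / (1 - (q * t⁻¹) ^ (N * (n:ℤ))))) * R2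
end

section
/- With the same definitions, f^{1,j}(p^{-(i+1)/2} z) · f^{i,j}(z) = f^{i+1,j}(p^{-1/2} z) for all integers 1 ≤ i < j ≤ N-1, as formal power series in z. -/
open PowerSeries

set_option maxHeartbeats 1000000
set_option maxRecDepth 4000

namespace Fusion
variable {K : Type*} [Field K]

lemma coeff_pexp (S : PowerSeries K) (n : ℕ) :
    coeff n (pexp S) = ∑ k ∈ Finset.range (n + 1),
      coeff n (S ^ k) / (Nat.factorial k : K) :=
  coeff_mk _ _

lemma coeff_pow_eq_zero {S : PowerSeries K} (hS : constantCoeff S = 0) {n k : ℕ}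
    (h : n < k) : coeff n (S ^ k) = 0 := by
  have hd : (X : K⟦X⟧) ^ k ∣ S ^ k := pow_dvd_pow_of_dvd (X_dvd_iff.mpr hS) k
  exact X_pow_dvd_iff.mp hd n h

lemma rescale_pexp (c : K) (S : PowerSeries K) :
    rescale c (pexp S) = pexp (rescale c S) := by
  ext n
  rw [coeff_rescale, coeff_pexp, coeff_pexp, Finset.mul_sum]
  refine Finset.sum_congr rfl fun k _ => ?_
  rw [← map_pow, coeff_rescale, mul_div_assoc]

lemma sum_triangle {M : Type*} [AddCommMonoid M] (f : ℕ → ℕ → M) (n : ℕ)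
    (hf : ∀ m l, n < m + l → f m l = 0) :
    ∑ k ∈ Finset.range (n + 1), ∑ p ∈ Finset.HasAntidiagonal.antidiagonal k, f p.1 p.2
      = ∑ m ∈ Finset.range (n + 1), ∑ l ∈ Finset.range (n + 1), f m l := by
  rw [← Finset.sum_product']
  have hsig : ∑ k ∈ Finset.range (n + 1), ∑ p ∈ Finset.HasAntidiagonal.antidiagonal k, f p.1 p.2
      = ∑ x ∈ (Finset.range (n + 1)).sigma (fun k => Finset.HasAntidiagonal.antidiagonal k),
          f x.2.1 x.2.2 := by
    rw [Finset.sum_sigma]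
  rw [hsig]
  rw [← Finset.sum_filter_of_ne (p := fun p : ℕ × ℕ => p.1 + p.2 ≤ n)
    (s := Finset.range (n+1) ×ˢ Finset.range (n+1)) (f := fun p => f p.1 p.2)
    (by intro p _ h; by_contra hc; exact h (hf p.1 p.2 (by omega)))]
  apply Finset.sum_nbij' (i := fun x => x.2) (j := fun p => ⟨p.1 + p.2, p⟩)
  · intro x hx
    simp only [Finset.mem_sigma, Finset.mem_range, Finset.HasAntidiagonal.mem_antidiagonal] at hx
    simp only [Finset.mem_filter, Finset.mem_product, Finset.mem_range]
    omega
  · intro p hp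
    simp only [Finset.mem_filter, Finset.mem_product, Finset.mem_range] at hp
    simp only [Finset.mem_sigma, Finset.mem_range, Finset.HasAntidiagonal.mem_antidiagonal]
    exact ⟨by omega, trivial⟩
  · intro x hx
    simp only [Finset.mem_sigma, Finset.mem_range, Finset.HasAntidiagonal.mem_antidiagonal] at hx
    obtain ⟨k, p⟩ := x
    obtain ⟨-, hx2⟩ := hx
    simp only at hx2 ⊢
    subst hx2
    rfl
  · intro p _; rfl
  · intro x _; rfl

lemma pexp_add [CharZero K] (A B : PowerSeries K) (hA : constantCoeff A = 0)
    (hB : constantCoeff B = 0) : pexp (A + B) = pexp A * pexp B := by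
  ext n
  set g : ℕ → ℕ → K := fun m l =>
    coeff n (A ^ m * B ^ l) / ((m.factorial : K) * (l.factorial : K)) with hg
  have hvan : ∀ m l : ℕ, n < m + l → g m l = 0 := by
    intro m l h
    have hd : (X : K⟦X⟧) ^ (m + l) ∣ A ^ m * B ^ l := by
      rw [pow_add]
      exact mul_dvd_mul (pow_dvd_pow_of_dvd (X_dvd_iff.mpr hA) m)
        (pow_dvd_pow_of_dvd (X_dvd_iff.mpr hB) l)
    simp [hg, X_pow_dvd_iff.mp hd n h]
  have hL : coeff n (pexp (A + B)) =
      ∑ m ∈ Finset.range (n + 1), ∑ l ∈ Finset.range (n + 1), g m l := by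
    rw [coeff_pexp, ← sum_triangle g n hvan]
    refine Finset.sum_congr rfl fun k _ => ?_
    rw [Finset.Nat.sum_antidiagonal_eq_sum_range_succ (fun m l => g m l) k]
    rw [add_pow, map_sum, Finset.sum_div]
    refine Finset.sum_congr rfl fun m hm => ?_
    have hmk : m ≤ k := Nat.lt_succ_iff.mp (Finset.mem_range.mp hm)
    rw [← map_natCast (C (R := K)) (k.choose m), coeff_mul_C, hg]
    have h1 : (k.factorial : K) ≠ 0 := Nat.cast_ne_zero.mpr k.factorial_ne_zero
    have h2 : (m.factorial : K) ≠ 0 := Nat.cast_ne_zero.mpr m.factorial_ne_zero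
    have h3 : ((k - m).factorial : K) ≠ 0 := Nat.cast_ne_zero.mpr (k - m).factorial_ne_zero
    have hnat : (k.choose m : K) * ((m.factorial : K) * ((k - m).factorial : K))
        = (k.factorial : K) := by
      exact_mod_cast congrArg (Nat.cast : ℕ → K)
        (by rw [← Nat.choose_mul_factorial_mul_factorial hmk]; ring)
    field_simp
    rw [← hnat]; ring
  have hR : ∀ p ∈ Finset.HasAntidiagonal.antidiagonal n,
      coeff p.1 (pexp A) * coeff p.2 (pexp B)
        = ∑ m ∈ Finset.range (n + 1), ∑ l ∈ Finset.range (n + 1),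
            (coeff p.1 (A ^ m) / (m.factorial : K)) *
              (coeff p.2 (B ^ l) / (l.factorial : K)) := by
    intro p hp
    have hpn : p.1 + p.2 = n := Finset.HasAntidiagonal.mem_antidiagonal.mp hp
    rw [coeff_pexp, coeff_pexp]
    rw [Finset.sum_subset (Finset.range_subset_range.mpr (by omega : p.1 + 1 ≤ n + 1))
      (fun m _ hm => by
        rw [coeff_pow_eq_zero hA (by simp only [Finset.mem_range] at hm ⊢; omega), zero_div])]
    rw [Finset.sum_subset (Finset.range_subset_range.mpr (by omega : p.2 + 1 ≤ n + 1))
      (fun l _ hl => by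
        rw [coeff_pow_eq_zero hB (by simp only [Finset.mem_range] at hl ⊢; omega), zero_div])]
    rw [Finset.sum_mul_sum]
  have hR2 : ∑ p ∈ Finset.HasAntidiagonal.antidiagonal n,
      ∑ m ∈ Finset.range (n + 1), ∑ l ∈ Finset.range (n + 1),
        (coeff p.1 (A ^ m) / (m.factorial : K)) *
          (coeff p.2 (B ^ l) / (l.factorial : K))
      = ∑ m ∈ Finset.range (n + 1), ∑ l ∈ Finset.range (n + 1), g m l := by
    rw [Finset.sum_comm]
    refine Finset.sum_congr rfl fun m _ => ?_
    rw [Finset.sum_comm]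
    refine Finset.sum_congr rfl fun l _ => ?_
    rw [hg]
    simp only [div_mul_div_comm, ← Finset.sum_div]
    rw [← coeff_mul]
  rw [hL, coeff_mul, Finset.sum_congr rfl hR, hR2]
end Fusion


namespace Fusion
noncomputable def sarg {K : Type*} [Field K] (q t sp : K) (N i j : ℤ) : PowerSeries K :=
  PowerSeries.mk fun n => if n = 0 then 0 else
    (1 / (n : K)) * (1 - q ^ (n : ℤ)) * (1 - t ^ (-(n : ℤ))) *
      ((1 - (q * t⁻¹) ^ (min i j * (n : ℤ))) / (1 - (q * t⁻¹) ^ (n : ℤ))) *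
      ((1 - (q * t⁻¹) ^ ((N - max i j) * (n : ℤ))) / (1 - (q * t⁻¹) ^ (N * (n : ℤ)))) *
      sp ^ (|i - j| * (n : ℤ))

lemma key_id {K : Type*} [Field K] {s : K} (hs : s ≠ 0) (i j M : ℤ) :
    s ^ (-(i + 1) * M) * s ^ ((j - 1) * M) * (1 - s ^ (2 * M))
      + s ^ ((j - i) * M) * (1 - s ^ (2 * (i * M)))
    = s ^ (-1 * M) * s ^ ((j - (i + 1)) * M) * (1 - s ^ (2 * ((i + 1) * M))) := by
  rw [← zpow_add₀ hs, ← zpow_add₀ hs]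
  rw [show -(i + 1) * M + (j - 1) * M = (j - i - 2) * M by ring,
      show -1 * M + (j - (i + 1)) * M = (j - i - 2) * M by ring]
  rw [mul_sub, mul_sub, mul_sub, mul_one,
      ← zpow_add₀ hs, ← zpow_add₀ hs, ← zpow_add₀ hs]
  rw [show (j - i - 2) * M + 2 * M = (j - i) * M by ring,
      show (j - i) * M + 2 * (i * M) = (j - i - 2) * M + 2 * ((i + 1) * M) by ring]
  ring

lemma sarg_add {K : Type*} [Field K] [CharZero K] (q t sp : K) (N : ℤ) (hN : 2 ≤ N)
    (hq : q ≠ 0) (ht : t ≠ 0) (hsp : sp ^ 2 = q * t⁻¹)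
    (hp : ∀ n : ℤ, n ≠ 0 → (q * t⁻¹) ^ n ≠ 1)
    (i j : ℤ) (hi : 1 ≤ i) (hij : i < j) (hj : j ≤ N - 1) :
    rescale (sp ^ (-(i + 1))) (sarg q t sp N 1 j) + sarg q t sp N i j
      = rescale sp⁻¹ (sarg q t sp N (i + 1) j) := by
  have hP : q * t⁻¹ ≠ 0 := mul_ne_zero hq (inv_ne_zero ht)
  have hs : sp ≠ 0 := by
    intro h; apply hP; rw [← hsp, h]; ring
  ext n
  simp only [map_add, coeff_rescale, sarg, coeff_mk]
  rcases Nat.eq_zero_or_pos n with h0 | h0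
  · simp [h0]
  rw [if_neg (by omega), if_neg (by omega), if_neg (by omega)]
  have hm0 : (n : ℤ) ≠ 0 := by omega
  have hn : (n : K) ≠ 0 := Nat.cast_ne_zero.mpr (by omega)
  set M : ℤ := (n : ℤ) with hM
  rw [show min 1 j = 1 from min_eq_left (by omega),
      show max 1 j = j from max_eq_right (by omega),
      show min i j = i from min_eq_left (by omega),
      show max i j = j from max_eq_right (by omega),
      show min (i + 1) j = i + 1 from min_eq_left (by omega),
      show max (i + 1) j = j from max_eq_right (by omega),
      show |1 - j| = j - 1 by rw [abs_of_nonpos (by omega)]; ring,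
      show |i - j| = j - i by rw [abs_of_nonpos (by omega)]; ring,
      show |i + 1 - j| = j - (i + 1) by rw [abs_of_nonpos (by omega)]; ring]
  have hconv : ∀ E : ℤ, (q * t⁻¹) ^ E = sp ^ (2 * E) := by
    intro E
    rw [← hsp, ← zpow_natCast sp 2, ← zpow_mul]
    norm_num
  have hpow1 : (sp ^ (-(i + 1))) ^ n = sp ^ (-(i + 1) * M) := by
    rw [← zpow_natCast (sp ^ (-(i + 1))) n, ← zpow_mul, hM]
  have hpow2 : (sp⁻¹) ^ n = sp ^ (-1 * M) := by
    rw [← zpow_natCast sp⁻¹ n, inv_zpow', hM, show -(n:ℤ) = -1 * (n:ℤ) by ring]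
  rw [hpow1, hpow2]
  simp only [hconv]
  rw [show (2 * (1 * M)) = 2 * M by ring, div_self (sub_ne_zero.mpr fun h =>
    hp M hm0 (by rw [hconv]; exact h.symm))]
  have hD : (1 : K) - sp ^ (2 * M) ≠ 0 :=
    sub_ne_zero.mpr fun h => hp M hm0 (by rw [hconv]; exact h.symm)
  have hDN : (1 : K) - sp ^ (2 * (N * M)) ≠ 0 :=
    sub_ne_zero.mpr fun h => hp (N * M) (mul_ne_zero (by omega) hm0)
      (by rw [hconv]; exact h.symm)
  have key := key_id hs i j M
  set e1 := sp ^ (-(i + 1) * M) with he1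
  set e2 := sp ^ ((j - 1) * M) with he2
  set e3 := sp ^ ((j - i) * M) with he3
  set e4 := sp ^ (-1 * M) with he4
  set e5 := sp ^ ((j - (i + 1)) * M) with he5
  set d := sp ^ (2 * M) with hd
  set di := sp ^ (2 * (i * M)) with hdi
  set ds := sp ^ (2 * ((i + 1) * M)) with hds
  set b := sp ^ (2 * ((N - j) * M)) with hb
  set dn := sp ^ (2 * (N * M)) with hdn
  calc e1 * (1 / (n : K) * (1 - q ^ M) * (1 - t ^ (-M)) * 1 * ((1 - b) / (1 - dn)) * e2) +
      1 / (n : K) * (1 - q ^ M) * (1 - t ^ (-M)) * ((1 - di) / (1 - d)) * ((1 - b) / (1 - dn)) * e3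
      = 1 / (n : K) * (1 - q ^ M) * (1 - t ^ (-M)) * ((1 - b) / (1 - dn)) *
          ((e1 * e2 * (1 - d) + e3 * (1 - di)) / (1 - d)) := by
        rw [add_div, mul_div_cancel_right₀ _ hD]; ring
    _ = 1 / (n : K) * (1 - q ^ M) * (1 - t ^ (-M)) * ((1 - b) / (1 - dn)) *
          ((e4 * e5 * (1 - ds)) / (1 - d)) := by rw [key]
    _ = e4 * (1 / (n : K) * (1 - q ^ M) * (1 - t ^ (-M)) * ((1 - ds) / (1 - d)) *
          ((1 - b) / (1 - dn)) * e5) := by ring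


lemma constantCoeff_sarg {K : Type*} [Field K] (q t sp : K) (N i j : ℤ) :
    PowerSeries.constantCoeff (sarg q t sp N i j) = 0 := by
  rw [← PowerSeries.coeff_zero_eq_constantCoeff_apply]
  simp [sarg]

lemma constantCoeff_rescale {K : Type*} [Field K] (c : K) (S : PowerSeries K) :
    PowerSeries.constantCoeff (PowerSeries.rescale c S)
      = PowerSeries.constantCoeff S := by
  rw [← PowerSeries.coeff_zero_eq_constantCoeff_apply, PowerSeries.coeff_rescale]
  simp

end Fusion

/-- Fusion identity: `f^{1,j}(p^{-(i+1)/2} z) · f^{i,j}(z) = f^{i+1,j}(p^{-1/2} z)`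
for `1 ≤ i < j ≤ N-1`. -/
theorem fser_fusion_minus {K : Type*} [Field K] [CharZero K] (q t sp : K) (N : ℤ) (hN : 2 ≤ N)
    (hq : q ≠ 0) (ht : t ≠ 0) (hsp : sp ^ 2 = q * t⁻¹)
    (hp : ∀ n : ℤ, n ≠ 0 → (q * t⁻¹) ^ n ≠ 1)
    (i j : ℤ) (hi : 1 ≤ i) (hij : i < j) (hj : j ≤ N - 1) :
    PowerSeries.rescale (sp ^ (-(i + 1))) (fser q t sp N 1 j) * fser q t sp N i j =
      PowerSeries.rescale sp⁻¹ (fser q t sp N (i + 1) j) := by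
  have hA : PowerSeries.constantCoeff
      (PowerSeries.rescale (sp ^ (-(i + 1))) (Fusion.sarg q t sp N 1 j)) = 0 := by
    rw [Fusion.constantCoeff_rescale, Fusion.constantCoeff_sarg]
  have hB : PowerSeries.constantCoeff (Fusion.sarg q t sp N i j) = 0 :=
    Fusion.constantCoeff_sarg q t sp N i j
  have h1 : fser q t sp N 1 j = pexp (Fusion.sarg q t sp N 1 j) := rfl
  have h2 : fser q t sp N i j = pexp (Fusion.sarg q t sp N i j) := rfl
  have h3 : fser q t sp N (i + 1) j = pexp (Fusion.sarg q t sp N (i + 1) j) := rfl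
  rw [h1, h2, h3, Fusion.rescale_pexp, Fusion.rescale_pexp, ← Fusion.pexp_add _ _ hA hB,
    Fusion.sarg_add q t sp N hN hq ht hsp hp i j hi hij hj]
end

section
/- With the same definitions and γ(p^{1/2} w) = (1-qw)(1-t^{-1}w)/((1-w)(1-pw)), the identity f^{1,j}(p^{(i+1)/2} z) · f^{i,j}(z) = f^{i+1,j}(p^{1/2} z) · γ(p^{(i-j+1)/2} z) holds for all integers 1 ≤ j ≤ i ≤ N-1 with i+1 ≤ N-1, as an identity of formal power series in z (expanding γ(p^{(i-j+1)/2} z) = (1-q p^{(i-j)/2} z)(1-t^{-1} p^{(i-j)/2} z)/((1-p^{(i-j)/2} z)(1-p^{(i-j+2)/2} z)) as a power series in z). -/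
open PowerSeries

set_option maxHeartbeats 2000000

namespace FusionAux

variable {K : Type*} [Field K]

lemma coeff_pow_eq_zero {S : PowerSeries K} (hS : constantCoeff S = 0)
    {n k : ℕ} (h : n < k) : coeff n (S ^ k) = 0 := by
  have hX : (X : PowerSeries K) ∣ S := X_dvd_iff.mpr hS
  have h2 : (X : PowerSeries K) ^ k ∣ S ^ k := pow_dvd_pow_of_dvd hX k
  exact (X_pow_dvd_iff.mp h2) n h

noncomputable def Etr (S : PowerSeries K) (M : ℕ) : PowerSeries K :=
  ∑ k ∈ Finset.range M, ((Nat.factorial k : K))⁻¹ • S ^ k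

lemma coeff_pexp_eq {S : PowerSeries K} (hS : constantCoeff S = 0) {n M : ℕ} (h : n < M) :
    coeff n (pexp S) = coeff n (Etr S M) := by
  rw [pexp, coeff_mk, Etr, map_sum]
  rw [Finset.sum_subset (Finset.range_subset_range.mpr h)]
  · exact Finset.sum_congr rfl fun k _ => by
      rw [LinearMap.map_smul, smul_eq_mul, div_eq_inv_mul]
  · intro k hk hk'
    have : n < k := by simp only [Finset.mem_range] at hk hk'; omega
    simp [coeff_pow_eq_zero hS this]

lemma derivative_Etr [CharZero K] (S : PowerSeries K) (M : ℕ) :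
    d⁄dX K (Etr S (M + 1)) = d⁄dX K S * Etr S M := by
  rw [Etr, map_sum, Finset.sum_range_succ']
  have h0 : d⁄dX K (((Nat.factorial 0 : K))⁻¹ • S ^ 0) = 0 := by simp
  rw [h0, add_zero, Etr, Finset.mul_sum]
  apply Finset.sum_congr rfl
  intro k _
  rw [Derivation.map_smul, Derivation.leibniz_pow, Nat.add_sub_cancel, Nat.factorial_succ,
    ← Nat.cast_smul_eq_nsmul K (k + 1), smul_smul]
  push_cast
  have hk : ((k : K) + 1) ≠ 0 := Nat.cast_add_one_ne_zero k
  have hfac : ((k.factorial : K)) ≠ 0 := Nat.cast_ne_zero.mpr (Nat.factorial_ne_zero k)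
  rw [show (((k : K) + 1) * (k.factorial : K))⁻¹ * ((k : K) + 1) = ((k.factorial : K))⁻¹ by
    field_simp]
  rw [smul_eq_mul, mul_smul_comm, mul_comm]

lemma derivative_pexp [CharZero K] {S : PowerSeries K} (hS : constantCoeff S = 0) :
    d⁄dX K (pexp S) = d⁄dX K S * pexp S := by
  ext n
  have h1 : coeff n (d⁄dX K (pexp S)) = coeff n (d⁄dX K (Etr S (n + 2))) := by
    rw [coeff_derivative, coeff_derivative, coeff_pexp_eq hS (Nat.lt_succ_self (n + 1))]
  rw [h1, show n + 2 = (n + 1) + 1 from rfl, derivative_Etr, coeff_mul, coeff_mul]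
  apply Finset.sum_congr rfl
  intro x hx
  have hle : x.2 ≤ n := by
    have := Finset.HasAntidiagonal.mem_antidiagonal.mp hx; omega
  rw [coeff_pexp_eq hS (show x.2 < n + 1 by omega)]

lemma constantCoeff_pexp (S : PowerSeries K) : constantCoeff (pexp S) = 1 := by
  rw [← coeff_zero_eq_constantCoeff_apply, pexp, coeff_mk]
  simp

lemma rescale_pexp (a : K) (S : PowerSeries K) : rescale a (pexp S) = pexp (rescale a S) := by
  ext n
  rw [coeff_rescale, pexp, pexp, coeff_mk, coeff_mk, Finset.mul_sum]
  exact Finset.sum_congr rfl fun k _ => by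
    rw [← map_pow, coeff_rescale, mul_div_assoc]

lemma logderiv_unique [CharZero K] {F G L : PowerSeries K}
    (hF : d⁄dX K F = L * F) (hG : d⁄dX K G = L * G)
    (h0 : constantCoeff F = constantCoeff G) : F = G := by
  ext n
  induction n using Nat.strong_induction_on with
  | _ n ih =>
    match n with
    | 0 => simpa using h0
    | Nat.succ n =>
      have hF' := congrArg (coeff n) hF
      have hG' := congrArg (coeff n) hG
      rw [coeff_derivative, coeff_mul] at hF' hG'
      have hsum : ∑ x ∈ Finset.HasAntidiagonal.antidiagonal n, coeff x.1 L * coeff x.2 F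
          = ∑ x ∈ Finset.HasAntidiagonal.antidiagonal n, coeff x.1 L * coeff x.2 G := by
        refine Finset.sum_congr rfl fun x hx => ?_
        have := Finset.HasAntidiagonal.mem_antidiagonal.mp hx
        rw [ih x.2 (by omega)]
      have heq : coeff (n + 1) F * ((n : K) + 1) = coeff (n + 1) G * ((n : K) + 1) := by
        rw [hF', hG', hsum]
      exact mul_right_cancel₀ (Nat.cast_add_one_ne_zero n) heq

lemma logD_mul {F G L M : PowerSeries K} (hF : d⁄dX K F = L * F) (hG : d⁄dX K G = M * G) :
    d⁄dX K (F * G) = (L + M) * (F * G) := by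
  rw [Derivation.leibniz, smul_eq_mul, smul_eq_mul, hF, hG]; ring

end FusionAux

namespace FusionAux
variable {K : Type*} [Field K]

lemma one_sub_mul_geom (c : K) : (1 - C c * X) * geom c = 1 := by
  ext n
  rw [sub_mul, one_mul, map_sub]
  cases n with
  | zero => simp [geom]
  | succ n =>
    rw [mul_assoc, coeff_C_mul, coeff_succ_X_mul]
    simp only [geom, coeff_mk, coeff_one, Nat.succ_ne_zero, if_false]
    rw [pow_succ]; ring

lemma derivative_geom (c : K) : d⁄dX K (geom c) = (C c * geom c) * geom c := by
  ext n
  rw [coeff_derivative, mul_assoc, coeff_C_mul, coeff_mul]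
  simp only [geom, coeff_mk]
  have h : ∑ x ∈ Finset.HasAntidiagonal.antidiagonal n, c ^ x.1 * c ^ x.2 = (n + 1 : ℕ) * c ^ n := by
    rw [Finset.sum_congr rfl (fun x hx => ?_), Finset.sum_const, Finset.Nat.card_antidiagonal,
      nsmul_eq_mul]
    rw [← pow_add, Finset.HasAntidiagonal.mem_antidiagonal.mp hx]
  rw [h, pow_succ]
  push_cast
  ring

lemma constantCoeff_geom (c : K) : constantCoeff (geom c) = 1 := by
  rw [← coeff_zero_eq_constantCoeff_apply, geom, coeff_mk, pow_zero]

lemma derivative_one_sub (c : K) :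
    d⁄dX K (1 - C c * X) = (-(C c) * geom c) * (1 - C c * X) := by
  have h1 : d⁄dX K (1 - C c * X) = -(C c) := by
    rw [map_sub]
    simp
  rw [h1, mul_assoc, mul_comm (geom c), one_sub_mul_geom, mul_one]

end FusionAux

lemma atoms_id {K : Type*} [Field K] (Q T B Cc D E W s c : K)
    (h1 : (1:K) - Q * T ≠ 0) (h2 : (1:K) - D ≠ 0) (hB : B ≠ 0) (hQ : Q ≠ 0) (hT : T ≠ 0)
    (hW : W ≠ 0) (hs : s ≠ 0) (hE : E ≠ 0) (hc : c ≠ 0) :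
    E * B / W * (1 / c * (1 - Q) * (1 - T) * ((1 - Q * T) / (1 - Q * T)) * ((1 - D / B) / (1 - D)) * W) * c +
      1 / c * (1 - Q) * (1 - T) * ((1 - B) / (1 - Q * T)) * ((1 - Cc) / (1 - D)) * E * c =
    s * (1 / c * (1 - Q) * (1 - T) * ((1 - B) / (1 - Q * T)) * ((1 - Cc / (Q * T)) / (1 - D)) * (E * (Q * T) / s)) * c +
      (-(Q * E) + -(T * E) + (E + Q * T * E)) := by
  have hQT : Q * T ≠ 0 := mul_ne_zero hQ hT
  rw [← sub_eq_zero]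
  field_simp
  ring


open FusionAux in
/-- Fusion identity with a `γ`-factor:
`f^{1,j}(p^{(i+1)/2} z) · f^{i,j}(z) = f^{i+1,j}(p^{1/2} z) · γ(p^{(i-j+1)/2} z)`
for `1 ≤ j ≤ i ≤ N-1` with `i+1 ≤ N-1`, where
`γ(p^{(i-j+1)/2} z) = (1-q p^{(i-j)/2} z)(1-t⁻¹ p^{(i-j)/2} z)/((1-p^{(i-j)/2} z)(1-p^{(i-j+2)/2} z))`
is expanded as a formal power series in `z`. -/
theorem fser_fusion_gamma {K : Type*} [Field K] [CharZero K] (q t sp : K) (N : ℤ) (hN : 2 ≤ N)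
    (hq : q ≠ 0) (ht : t ≠ 0) (hsp : sp ^ 2 = q * t⁻¹)
    (hp : ∀ n : ℤ, n ≠ 0 → (q * t⁻¹) ^ n ≠ 1)
    (i j : ℤ) (hj : 1 ≤ j) (hji : j ≤ i) (hi : i + 1 ≤ N - 1) :
    PowerSeries.rescale (sp ^ (i + 1)) (fser q t sp N 1 j) * fser q t sp N i j =
      PowerSeries.rescale sp (fser q t sp N (i + 1) j) * gammaSer q t sp (sp ^ (i - j)) := by
  -- min/max/abs simplifications
  have hmin1 : min (1:ℤ) j = 1 := min_eq_left hj
  have hmax1 : max (1:ℤ) j = j := max_eq_right hj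
  have hminij : min i j = j := min_eq_right hji
  have hmaxij : max i j = i := max_eq_left hji
  have hmin2 : min (i+1) j = j := min_eq_right (by omega)
  have hmax2 : max (i+1) j = i+1 := max_eq_left (by omega)
  have habs1 : |(1:ℤ) - j| = j - 1 := by rw [abs_of_nonpos (by omega)]; ring
  have habsij : |i - j| = i - j := abs_of_nonneg (by omega)
  have habs2 : |i + 1 - j| = i + 1 - j := abs_of_nonneg (by omega)
  set g1 : ℕ → K := fun n => if n = 0 then 0 else
    (1 / (n : K)) * (1 - q ^ (n : ℤ)) * (1 - t ^ (-(n : ℤ))) *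
      ((1 - (q * t⁻¹) ^ ((1:ℤ) * (n : ℤ))) / (1 - (q * t⁻¹) ^ (n : ℤ))) *
      ((1 - (q * t⁻¹) ^ ((N - j) * (n : ℤ))) / (1 - (q * t⁻¹) ^ (N * (n : ℤ)))) *
      sp ^ ((j - 1) * (n : ℤ)) with hg1
  set g2 : ℕ → K := fun n => if n = 0 then 0 else
    (1 / (n : K)) * (1 - q ^ (n : ℤ)) * (1 - t ^ (-(n : ℤ))) *
      ((1 - (q * t⁻¹) ^ (j * (n : ℤ))) / (1 - (q * t⁻¹) ^ (n : ℤ))) *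
      ((1 - (q * t⁻¹) ^ ((N - i) * (n : ℤ))) / (1 - (q * t⁻¹) ^ (N * (n : ℤ)))) *
      sp ^ ((i - j) * (n : ℤ)) with hg2
  set g3 : ℕ → K := fun n => if n = 0 then 0 else
    (1 / (n : K)) * (1 - q ^ (n : ℤ)) * (1 - t ^ (-(n : ℤ))) *
      ((1 - (q * t⁻¹) ^ (j * (n : ℤ))) / (1 - (q * t⁻¹) ^ (n : ℤ))) *
      ((1 - (q * t⁻¹) ^ ((N - (i+1)) * (n : ℤ))) / (1 - (q * t⁻¹) ^ (N * (n : ℤ)))) *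
      sp ^ ((i + 1 - j) * (n : ℤ)) with hg3
  have hf1 : fser q t sp N 1 j = pexp (mk g1) := by
    rw [fser, hg1, hmin1, hmax1, habs1]
  have hf2 : fser q t sp N i j = pexp (mk g2) := by
    rw [fser, hg2, hminij, hmaxij, habsij]
  have hf3 : fser q t sp N (i+1) j = pexp (mk g3) := by
    rw [fser, hg3, hmin2, hmax2, habs2]
  -- the rescaled log-series
  set A1 : PowerSeries K := mk fun n => (sp ^ (i+1)) ^ n * g1 n with hA1
  set A2 : PowerSeries K := mk g2 with hA2
  set A3 : PowerSeries K := mk fun n => sp ^ n * g3 n with hA3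
  have hre1 : rescale (sp ^ (i+1)) (fser q t sp N 1 j) = pexp A1 := by
    rw [hf1, rescale_pexp, rescale_mk]
  have hre3 : rescale sp (fser q t sp N (i+1) j) = pexp A3 := by
    rw [hf3, rescale_pexp, rescale_mk]
  have hc1 : constantCoeff A1 = 0 := by
    rw [← coeff_zero_eq_constantCoeff_apply, hA1, coeff_mk]; simp [hg1]
  have hc2 : constantCoeff A2 = 0 := by
    rw [← coeff_zero_eq_constantCoeff_apply, hA2, coeff_mk]; simp [hg2]
  have hc3 : constantCoeff A3 = 0 := by
    rw [← coeff_zero_eq_constantCoeff_apply, hA3, coeff_mk]; simp [hg3]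
  -- log-derivatives
  set a : K := sp ^ (i - j) with ha
  set Lg : PowerSeries K :=
    (-(C (q * a)) * geom (q * a) + -(C (t⁻¹ * a)) * geom (t⁻¹ * a))
      + (C a * geom a + C (sp ^ 2 * a) * geom (sp ^ 2 * a)) with hLg
  have hdL : d⁄dX K (pexp A1 * pexp A2)
      = (d⁄dX K A1 + d⁄dX K A2) * (pexp A1 * pexp A2) :=
    logD_mul (derivative_pexp hc1) (derivative_pexp hc2)
  have hdR : d⁄dX K (pexp A3 * gammaSer q t sp a)
      = (d⁄dX K A3 + Lg) * (pexp A3 * gammaSer q t sp a) := by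
    refine logD_mul (derivative_pexp hc3) ?_
    rw [gammaSer, hLg, mul_assoc]
    refine logD_mul (logD_mul (derivative_one_sub _) (derivative_one_sub _)) ?_
    exact logD_mul (derivative_geom _) (derivative_geom _)
  -- the key identity of log-derivatives
  have hkey : d⁄dX K A1 + d⁄dX K A2 = d⁄dX K A3 + Lg := by
    ext n
    rw [map_add, map_add, coeff_derivative, coeff_derivative, coeff_derivative,
      hA1, hA2, hA3, coeff_mk, coeff_mk, coeff_mk]
    have hCg : ∀ c : K, (coeff n) (C c * geom c) = c ^ (n + 1) := fun c => by
      rw [coeff_C_mul, geom, coeff_mk, pow_succ']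
    rw [hLg]; simp only [map_add, neg_mul, map_neg, hCg]
    simp only [hg1, hg2, hg3, Nat.succ_ne_zero, if_false]
    push_cast
    have hnn : (0:ℤ) < (n : ℤ) + 1 := by omega
    generalize hmdef : ((n : ℤ) + 1) = m at *
    have hm : m ≠ 0 := by omega
    have hNm : N * m ≠ 0 := mul_ne_zero (by omega) hm
    have hc : ((n : K) + 1) ≠ 0 := Nat.cast_add_one_ne_zero n
    have hu0 : q * t⁻¹ ≠ 0 := mul_ne_zero hq (inv_ne_zero ht)
    have hsp0 : sp ≠ 0 := by
      intro h; rw [h] at hsp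
      exact hu0 (by rw [← hsp]; ring)
    have hnp : ∀ x : K, x ^ m = x ^ (n + 1) := fun x => by
      rw [← hmdef, show (n : ℤ) + 1 = ((n + 1 : ℕ) : ℤ) by push_cast; ring, zpow_natCast]
    have hsp2 : sp ^ (2 : ℤ) = q * t⁻¹ := by
      rw [show (2 : ℤ) = ((2 : ℕ) : ℤ) from rfl, zpow_natCast, hsp]
    have r8 : a ^ m = sp ^ ((i - j) * m) := by
      rw [ha]; exact (zpow_mul sp (i - j) m).symm
    have e_r0 : (q * t⁻¹) ^ m = q ^ m * t ^ (-m) := by rw [mul_zpow, inv_zpow']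
    rw [hsp, ← hnp sp, ← hnp (sp ^ (i + 1)), ← hnp (q * a), ← hnp (t⁻¹ * a), ← hnp a,
      ← hnp (q * t⁻¹ * a)]
    rw [← zpow_mul sp (i + 1) m]
    rw [one_mul]
    rw [show (N - j) * m = N * m - j * m by ring, zpow_sub₀ hu0]
    rw [show (N - (i + 1)) * m = (N - i) * m - m by ring, zpow_sub₀ hu0]
    rw [show (i + 1) * m = (i - j) * m + 2 * (j * m) - (j - 1) * m by ring,
      zpow_sub₀ hsp0, zpow_add₀ hsp0]
    rw [zpow_mul sp 2, hsp2]
    rw [show (i + 1 - j) * m = (i - j) * m + 2 * m - m by ring,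
      zpow_sub₀ hsp0, zpow_add₀ hsp0, zpow_mul sp 2, hsp2]
    rw [mul_zpow q a m, mul_zpow t⁻¹ a m, mul_zpow (q * t⁻¹) a m, inv_zpow']
    rw [r8, e_r0]
    have h1 : (1 : K) - q ^ m * t ^ (-m) ≠ 0 := by
      have hh := hp m hm; rw [e_r0] at hh; exact sub_ne_zero.mpr (Ne.symm hh)
    have h2 : (1 : K) - (q * t⁻¹) ^ (N * m) ≠ 0 := sub_ne_zero.mpr (Ne.symm (hp (N * m) hNm))
    have hB : (q * t⁻¹) ^ (j * m) ≠ 0 := zpow_ne_zero _ hu0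
    have hQ : q ^ m ≠ 0 := zpow_ne_zero _ hq
    have hT : t ^ (-m) ≠ 0 := zpow_ne_zero _ ht
    have hs1 : sp ^ ((j - 1) * m) ≠ 0 := zpow_ne_zero _ hsp0
    have hs2 : sp ^ m ≠ 0 := zpow_ne_zero _ hsp0
    have hE : sp ^ ((i - j) * m) ≠ 0 := zpow_ne_zero _ hsp0
    generalize hg1' : q ^ m = Q at h1 hQ ⊢
    generalize hg2' : t ^ (-m) = T at h1 hT ⊢
    generalize hg3' : (q * t⁻¹) ^ (j * m) = B at hB ⊢
    generalize hg4' : (q * t⁻¹) ^ (N * m) = D at h2 ⊢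
    generalize hg5' : (q * t⁻¹) ^ ((N - i) * m) = Cc
    generalize hg6' : sp ^ ((i - j) * m) = E at hE ⊢
    generalize hg7' : sp ^ ((j - 1) * m) = W at hs1 ⊢
    generalize hg8' : sp ^ m = s at hs2 ⊢
    generalize hg9' : ((n : K) + 1) = c at hc ⊢
    exact atoms_id Q T B Cc D E W s c h1 h2 hB hQ hT hs1 hs2 hE hc
  rw [hre1, hf2, hre3]
  refine logderiv_unique hdL ?_ ?_
  · rw [← hkey] at hdR; exact hdR
  · rw [map_mul, map_mul, constantCoeff_pexp, constantCoeff_pexp, gammaSer]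
    simp [constantCoeff_geom, constantCoeff_pexp]
end

section
/- Let N ≥ 2 and 1 ≤ i ≤ N-1 be integers, and t = q^{β} with β = (N+1)/N. Define p = q t^{-1} = q^{-1/N} and for m ≥ 1 let a^i_{2m} be the coefficients of the even power series expansion (1-q^n)(1-t^{-n})·((1-p^{in})/(1-p^n))·((1-p^{(N-i)n})/(1-p^{Nn})) = Σ_{m>0} a^i_{2m} (nħ)^{2m} when q = e^{ħ}. Then exp((1/2) Σ_{m>0} a^i_{2m} ζ(1-2m) ħ^{2m}) = binom(N,i)^{-1} · [N choose i]_p, where [N choose i]_p = [N]!/([i]![N-i]!) is the p-binomial coefficient with [n] = (p^{n/2} - p^{-n/2})/(p^{1/2} - p^{-1/2}), as an identity of convergent power series in ħ for |ħ| sufficiently small. -/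
/-- Bernoulli numbers in the paper's convention: `B_m = (-1)^{m-1} B^{std}_{2m}`. -/
noncomputable def Bm (m : ℕ) : ℚ := (-1) ^ (m - 1) * bernoulli (2 * m)

/-- `ζ(1-2m) = (-1)^m B_m/(2m)` (the value of the analytically continued zeta function). -/
noncomputable def zval (m : ℕ) : ℝ := (-1) ^ m * (Bm m : ℝ) / (2 * m)

/-- The function `(1-q^n)(1-t^{-n})·((1-p^{in})/(1-p^n))·((1-p^{(N-i)n})/(1-p^{Nn}))`
with `q = e^hbar`, `t = q^{(N+1)/N}`, `p = q t⁻¹ = e^{-hbar/N}`. -/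
noncomputable def Fexp (N i : ℕ) (hbar : ℝ) (n : ℕ) : ℝ :=
  (1 - Real.exp ((n : ℝ) * hbar)) *
    (1 - Real.exp (-(((N : ℝ) + 1) / N * ((n : ℝ) * hbar)))) *
    ((1 - Real.exp (-((i : ℝ) * n * hbar / N))) / (1 - Real.exp (-((n : ℝ) * hbar / N)))) *
    ((1 - Real.exp (-(((N : ℝ) - i) * n * hbar / N))) / (1 - Real.exp (-((N : ℝ) * n * hbar / N))))

/-- The `p`-number `[n] = (p^{n/2}-p^{-n/2})/(p^{1/2}-p^{-1/2}) = sinh(nhbar/(2N))/sinh(hbar/(2N))`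
for `p = e^{-hbar/N}`. -/
noncomputable def qnum (N : ℕ) (hbar : ℝ) (n : ℕ) : ℝ :=
  Real.sinh ((n : ℝ) * hbar / (2 * N)) / Real.sinh (hbar / (2 * N))

/-- The `p`-factorial `[n]! = [n]⋯[1]`. -/
noncomputable def qfact (N : ℕ) (hbar : ℝ) (n : ℕ) : ℝ := ∏ j ∈ Finset.Icc 1 n, qnum N hbar j

/-- The `p`-binomial coefficient `[N choose i] = [N]!/([i]![N-i]!)`. -/
noncomputable def qbinom (N : ℕ) (hbar : ℝ) (i : ℕ) : ℝ :=
  qfact N hbar N / (qfact N hbar i * qfact N hbar (N - i))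

open Finset Real Filter Topology

lemma coeff_eq_zero {c : ℕ → ℝ} {ρ : ℝ} (hρ : 0 < ρ)
    (h : ∀ x : ℝ, 0 < x → x < ρ → HasSum (fun k : ℕ => c k * x ^ k) 0) : ∀ k, c k = 0 := by
  have hx1 : (0:ℝ) < ρ/2 := by linarith
  have hsum := (h (ρ/2) hx1 (by linarith)).summable
  have htend := hsum.tendsto_atTop_zero.abs
  rw [abs_zero] at htend
  obtain ⟨C, hC⟩ := htend.bddAbove_range
  have hCb : ∀ m : ℕ, |c m| * (ρ/2) ^ m ≤ C := by
    intro m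
    have h0 : |c m * (ρ/2) ^ m| ≤ C := hC (Set.mem_range_self m)
    rwa [abs_mul, abs_of_pos (pow_pos hx1 m)] at h0
  have hC0 : 0 ≤ C := le_trans (by positivity) (hCb 0)
  have key : ∀ j : ℕ, (∀ x : ℝ, 0 < x → x < ρ/4 → HasSum (fun k : ℕ => c (k + j) * x ^ k) 0) →
      c j = 0 ∧ ∀ x : ℝ, 0 < x → x < ρ/4 → HasSum (fun k : ℕ => c (k + (j+1)) * x ^ k) 0 := by
    intro j hj
    set K : ℝ := C * ((ρ/2)⁻¹) ^ (j+1) with hK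
    have hK0 : 0 ≤ K := by positivity
    -- shifted sum
    have hshift : ∀ x : ℝ, 0 < x → x < ρ/4 →
        HasSum (fun k : ℕ => c (k + 1 + j) * x ^ (k + 1)) (-(c j)) := by
      intro x hx0 hx4
      have hx := hj x hx0 hx4
      have h2 : HasSum (fun n : ℕ => c ((n + 1) + j) * x ^ (n + 1)) (-(c (0 + j) * x ^ 0)) := by
        refine (hasSum_nat_add_iff (f := fun k : ℕ => c (k + j) * x ^ k) 1).mpr ?_
        simpa using hx
      simpa using h2
    -- coefficient bound
    have hbound : ∀ x : ℝ, 0 < x → x < ρ/4 → ∀ k : ℕ,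
        |c (k + 1 + j) * x ^ (k + 1)| ≤ K * x * (1/2) ^ k := by
      intro x hx0 hx4 k
      have h1 : |c (k + 1 + j)| ≤ C * ((ρ/2)⁻¹) ^ (k + 1 + j) := by
        rw [inv_pow, ← div_eq_mul_inv, le_div_iff₀ (pow_pos hx1 _)]
        exact hCb _
      have hxp : (0:ℝ) < x ^ (k+1) := pow_pos hx0 _
      calc |c (k + 1 + j) * x ^ (k + 1)| = |c (k + 1 + j)| * x ^ (k + 1) := by
            rw [abs_mul, abs_of_pos hxp]
        _ ≤ C * ((ρ/2)⁻¹) ^ (k + 1 + j) * x ^ (k + 1) := by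
            exact mul_le_mul_of_nonneg_right h1 hxp.le
        _ ≤ K * x * (1/2) ^ k := by
            rw [hK]
            have hsplit : ((ρ/2)⁻¹) ^ (k + 1 + j) = ((ρ/2)⁻¹) ^ (j+1) * ((ρ/2)⁻¹) ^ k := by
              rw [← pow_add]; ring_nf
            rw [hsplit, pow_succ]
            have h3 : ((ρ/2)⁻¹) ^ k * x ^ k ≤ (1/2) ^ k := by
              rw [← mul_pow]
              apply pow_le_pow_left₀ (by positivity)
              rw [inv_mul_le_iff₀ hx1]
              linarith
            calc C * (((ρ/2)⁻¹) ^ (j+1) * ((ρ/2)⁻¹) ^ k) * (x ^ k * x)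
                = (C * ((ρ/2)⁻¹) ^ (j+1) * x) * (((ρ/2)⁻¹) ^ k * x ^ k) := by ring
              _ ≤ (C * ((ρ/2)⁻¹) ^ (j+1) * x) * (1/2) ^ k := by
                  apply mul_le_mul_of_nonneg_left h3 (by positivity)
              _ = C * ((ρ/2)⁻¹) ^ (j+1) * x * (1/2) ^ k := by ring
    have hcj : c j = 0 := by
      have habs : ∀ x : ℝ, 0 < x → x < ρ/4 → |c j| ≤ 2 * K * x := by
        intro x hx0 hx4
        have hgeo0 : HasSum (fun k : ℕ => (1/2 : ℝ) ^ k) 2 := by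
          have := hasSum_geometric_of_lt_one (r := (1/2 : ℝ)) (by norm_num) (by norm_num)
          norm_num at this
          exact this
        have hgeo : HasSum (fun k : ℕ => K * x * (1/2 : ℝ) ^ k) (K * x * 2) :=
          hgeo0.mul_left (K * x)
        have hsum2 : Summable fun k : ℕ => |c (k + 1 + j) * x ^ (k + 1)| :=
          Summable.of_nonneg_of_le (fun k => abs_nonneg _) (hbound x hx0 hx4) hgeo.summable
        have hS := hshift x hx0 hx4
        have h5 : |(-(c j))| ≤ ∑' k, |c (k + 1 + j) * x ^ (k + 1)| := by
          rw [← hS.tsum_eq]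
          simp only [← Real.norm_eq_abs] at hsum2 ⊢
          exact norm_tsum_le_tsum_norm hsum2
        have h6 : ∑' k, |c (k + 1 + j) * x ^ (k + 1)| ≤ K * x * 2 :=
          hgeo.tsum_eq ▸ Summable.tsum_le_tsum (hbound x hx0 hx4) hsum2 hgeo.summable
        rw [abs_neg] at h5
        linarith
      have hle : |c j| ≤ 0 := by
        refine le_of_forall_pos_le_add fun ε hε => ?_
        have hx0 : (0:ℝ) < min (ρ/8) (ε/(2*K+1)) := by positivity
        have hx4 : min (ρ/8) (ε/(2*K+1)) < ρ/4 :=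
          lt_of_le_of_lt (min_le_left _ _) (by linarith)
        have hb := habs _ hx0 hx4
        have h7 : 2 * K * min (ρ/8) (ε/(2*K+1)) ≤ 2 * K * (ε/(2*K+1)) :=
          mul_le_mul_of_nonneg_left (min_le_right _ _) (by linarith)
        have h8 : 2 * K * (ε/(2*K+1)) ≤ ε := by
          rw [mul_div_assoc', div_le_iff₀ (by linarith)]
          nlinarith
        linarith
      exact abs_eq_zero.mp (le_antisymm hle (abs_nonneg _))
    refine ⟨hcj, ?_⟩
    intro x hx0 hx4
    have h2 := hshift x hx0 hx4
    rw [hcj, neg_zero] at h2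
    have h3 := h2.mul_right x⁻¹
    rw [zero_mul] at h3
    have heq : (fun k : ℕ => c (k + (j+1)) * x ^ k)
        = fun k : ℕ => c (k + 1 + j) * x ^ (k+1) * x⁻¹ := by
      funext k
      rw [show k + (j+1) = k + 1 + j by omega, pow_succ, mul_assoc, mul_assoc,
        mul_inv_cancel₀ hx0.ne', mul_one]
    rw [heq]
    exact h3
  have main : ∀ j : ℕ, ∀ x : ℝ, 0 < x → x < ρ/4 → HasSum (fun k : ℕ => c (k + j) * x ^ k) 0 := by
    intro j
    induction j with
    | zero => intro x hx0 hx4; simpa using h x hx0 (by linarith)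
    | succ n ih => exact (key n ih).2
  exact fun k => (key k (main k)).1


lemma sum_reflect_split (V : ℝ → ℝ) (hVe : ∀ x, V (-x) = V x) (hV0 : V 0 = 0)
    (N i : ℕ) (hi : i ≤ N) :
    ∑ k ∈ Finset.range (N + 1), V ((k : ℝ) - i)
      = ∑ k ∈ Finset.range (i + 1), V k + ∑ k ∈ Finset.range (N - i + 1), V k := by
  rw [Finset.range_eq_Ico,
    ← Finset.sum_Ico_consecutive (fun k : ℕ => V ((k : ℝ) - i))
      (Nat.zero_le (i+1)) (by omega : i + 1 ≤ N + 1)]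
  congr 1
  · rw [← Finset.range_eq_Ico, ← Finset.sum_range_reflect]
    apply Finset.sum_congr rfl
    intro k hk
    rw [Finset.mem_range] at hk
    have hki : k ≤ i := by omega
    have h1 : i + 1 - 1 - k = i - k := by omega
    have h2 : ((i - k : ℕ) : ℝ) = (i : ℝ) - k := by
      push_cast [Nat.cast_sub hki]; ring
    simp only [h1, h2]
    rw [show (i : ℝ) - k - i = -(k : ℝ) by ring, hVe]
  · rw [Finset.sum_Ico_eq_sum_range]
    have hn : N + 1 - (i + 1) = N - i := by omega
    rw [hn, Finset.sum_range_succ' (fun k : ℕ => V (k : ℝ)) (N - i)]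
    rw [Nat.cast_zero, hV0, add_zero]
    apply Finset.sum_congr rfl
    intro k _
    have : ((i + 1 + k : ℕ) : ℝ) - i = ((k + 1 : ℕ) : ℝ) := by push_cast; ring
    rw [this]
lemma hasSum_exp_real (x : ℝ) : HasSum (fun n : ℕ => x ^ n / n.factorial) (Real.exp x) := by
  rw [Real.exp_eq_exp_ℝ]
  exact NormedSpace.expSeries_div_hasSum_exp x

noncomputable def Acoef (N i : ℕ) (m : ℕ) : ℝ :=
  (∑ k ∈ Finset.range (N + 1),
    (((k : ℝ) - i) ^ (2 * m) + ((k : ℝ) + i - N) ^ (2 * m)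
      - (k : ℝ) ^ (2 * m) - ((k : ℝ) - N) ^ (2 * m))) / ((N : ℝ) ^ (2 * m) * (2 * m).factorial)

lemma frac_id {K : Type*} [Field K] (x y z : K) (hx : x ≠ 0) (hy0 : y ≠ 0) (hz : z ≠ 0)
    (hx1 : x ≠ 1) (hy1 : y ≠ 1) :
    (1 - y) * (1 - (y * x)⁻¹) * ((1 - z⁻¹) / (1 - x⁻¹)) * ((1 - z / y) / (1 - y⁻¹))
      = (y * x - 1) / (x - 1) * (z⁻¹ + z / y - 1 - y⁻¹) := by
  have d1 : 1 - x⁻¹ ≠ 0 := by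
    rw [sub_ne_zero]
    exact fun hc => hx1 (by rw [← inv_inv x, ← hc, inv_one])
  have d2 : 1 - y⁻¹ ≠ 0 := by
    rw [sub_ne_zero]
    exact fun hc => hy1 (by rw [← inv_inv y, ← hc, inv_one])
  have d3 : x - 1 ≠ 0 := sub_ne_zero.mpr hx1
  have d4 : y - 1 ≠ 0 := sub_ne_zero.mpr hy1
  rw [show (1 : K) - x⁻¹ = (x - 1)/x by field_simp, show (1 : K) - y⁻¹ = (y - 1)/y by field_simp]
  field_simp
  ring

lemma hasSum_Acoef (N i : ℕ) (hN : 2 ≤ N) (hi1 : 1 ≤ i) (hi2 : i ≤ N - 1)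
    (hbar : ℝ) (hh : hbar ≠ 0) :
    HasSum (fun m : ℕ => Acoef N i (m + 1) * hbar ^ (2 * (m + 1))) (Fexp N i hbar 1) := by
  have hNR : (0:ℝ) < N := by positivity
  set u : ℝ := hbar / N with hu
  have hu0 : u ≠ 0 := div_ne_zero hh hNR.ne'
  set w : ℝ := Real.exp u with hw
  have hw0 : w ≠ 0 := (Real.exp_pos u).ne'
  have hw1 : w ≠ 1 := by
    rw [hw, Ne, Real.exp_eq_one_iff]
    exact hu0
  have hwN : ∀ n : ℕ, Real.exp ((n : ℝ) * u) = w ^ n := fun n => Real.exp_nat_mul u n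
  have hwN1 : w ^ N ≠ 1 := by
    rw [← hwN, Ne, Real.exp_eq_one_iff]
    intro hc
    exact hh (by rw [hu, mul_div_cancel₀ _ hNR.ne'] at hc; exact hc)
  -- the summand function
  set S : ℕ → ℝ := fun j => ∑ k ∈ Finset.range (N + 1),
    (((k : ℝ) - i) ^ j + ((k : ℝ) + i - N) ^ j - (k : ℝ) ^ j - ((k : ℝ) - N) ^ j) with hS
  -- per-k sums
  have hk : ∀ k ∈ Finset.range (N + 1),
      HasSum (fun j : ℕ => ((((k : ℝ) - i) * u) ^ j / j.factorial
          + (((k : ℝ) + i - N) * u) ^ j / j.factorial)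
          - ((k : ℝ) * u) ^ j / j.factorial - ((((k : ℝ) - N) * u) ^ j / j.factorial))
        (Real.exp (((k : ℝ) - i) * u) + Real.exp (((k : ℝ) + i - N) * u)
          - Real.exp ((k : ℝ) * u) - Real.exp (((k : ℝ) - N) * u)) := by
    intro k _
    exact (((hasSum_exp_real _).add (hasSum_exp_real _)).sub (hasSum_exp_real _)).sub
      (hasSum_exp_real _)
  have HS := hasSum_sum hk
  -- identify the value with Fexp
  have hval : ∑ k ∈ Finset.range (N + 1),
      (Real.exp (((k : ℝ) - i) * u) + Real.exp (((k : ℝ) + i - N) * u)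
          - Real.exp ((k : ℝ) * u) - Real.exp (((k : ℝ) - N) * u)) = Fexp N i hbar 1 := by
    have hterm : ∀ k ∈ Finset.range (N + 1),
        Real.exp (((k : ℝ) - i) * u) + Real.exp (((k : ℝ) + i - N) * u)
          - Real.exp ((k : ℝ) * u) - Real.exp (((k : ℝ) - N) * u)
        = w ^ k * ((w ^ i)⁻¹ + w ^ i / w ^ N - 1 - (w ^ N)⁻¹) := by
      intro k _
      have e1 : Real.exp (((k : ℝ) - i) * u) = w ^ k / w ^ i := by
        rw [sub_mul, Real.exp_sub, hwN, hwN]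
      have e2 : Real.exp (((k : ℝ) + i - N) * u) = w ^ k * w ^ i / w ^ N := by
        rw [show ((k : ℝ) + i - N) * u = ((k : ℝ) * u + (i : ℝ) * u) - (N : ℝ) * u by ring,
          Real.exp_sub, Real.exp_add, hwN, hwN, hwN]
      have e3 : Real.exp ((k : ℝ) * u) = w ^ k := hwN k
      have e4 : Real.exp (((k : ℝ) - N) * u) = w ^ k / w ^ N := by
        rw [sub_mul, Real.exp_sub, hwN, hwN]
      rw [e1, e2, e3, e4]
      field_simp
    rw [Finset.sum_congr rfl hterm, ← Finset.sum_mul, geom_sum_eq hw1]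
    -- now a rational identity in w
    have f1 : Real.exp ((1:ℕ) * hbar) = w ^ N := by
      rw [← hwN, Nat.cast_one, one_mul]
      congr 1
      field_simp [hu]; rw [hu]; field_simp
    have f2 : Real.exp (-(((N : ℝ) + 1) / N * (((1:ℕ) : ℝ) * hbar))) = (w ^ (N+1))⁻¹ := by
      rw [← hwN, ← Real.exp_neg]
      congr 1
      push_cast
      field_simp [hu]; rw [hu]; field_simp
    have f3 : Real.exp (-((i : ℝ) * ((1:ℕ) : ℝ) * hbar / N)) = (w ^ i)⁻¹ := by
      rw [← hwN, ← Real.exp_neg]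
      congr 1
      push_cast
      field_simp [hu]; rw [hu]; field_simp
    have f4 : Real.exp (-(((1:ℕ) : ℝ) * hbar / N)) = w⁻¹ := by
      rw [hw, ← Real.exp_neg]
      congr 1
      push_cast
      field_simp [hu]; rw [hu]; field_simp
    have f5 : Real.exp (-(((N : ℝ) - i) * ((1:ℕ) : ℝ) * hbar / N)) = w ^ i / w ^ N := by
      rw [show -(((N : ℝ) - i) * ((1:ℕ) : ℝ) * hbar / N) = (i : ℝ) * u - (N : ℝ) * u by
        push_cast; field_simp [hu]; rw [hu]; field_simp; ring, Real.exp_sub, hwN, hwN]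
    have f6 : Real.exp (-((N : ℝ) * ((1:ℕ) : ℝ) * hbar / N)) = (w ^ N)⁻¹ := by
      rw [← hwN, ← Real.exp_neg]
      congr 1
      push_cast
      field_simp [hu]; rw [hu]; field_simp
    rw [Fexp, f1, f2, f3, f4, f5, f6, pow_succ]
    exact (frac_id w (w ^ N) (w ^ i) hw0 (pow_ne_zero _ hw0) (pow_ne_zero _ hw0) hw1 hwN1).symm
  rw [← hval]
  -- reindex
  have hG : HasSum (fun j : ℕ => S j * u ^ j / j.factorial)
      (∑ k ∈ Finset.range (N + 1),
        (Real.exp (((k : ℝ) - i) * u) + Real.exp (((k : ℝ) + i - N) * u)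
          - Real.exp ((k : ℝ) * u) - Real.exp (((k : ℝ) - N) * u))) := by
    convert HS using 1
    funext j
    rw [hS, Finset.sum_mul, Finset.sum_div]
    apply Finset.sum_congr rfl
    intro k _
    rw [mul_pow, mul_pow, mul_pow, mul_pow]
    ring
  have hS0 : S 0 = 0 := by
    rw [hS]
    simp
  have hSodd : ∀ j : ℕ, Odd j → S j = 0 := by
    intro j hj
    have hrefl := Finset.sum_range_reflect (fun k : ℕ =>
      (((k : ℝ) - i) ^ j + ((k : ℝ) + i - N) ^ j - (k : ℝ) ^ j - ((k : ℝ) - N) ^ j)) (N + 1)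
    have hneg : ∀ k ∈ Finset.range (N + 1),
        ((((N + 1 - 1 - k : ℕ) : ℝ) - i) ^ j + (((N + 1 - 1 - k : ℕ) : ℝ) + i - N) ^ j
          - ((N + 1 - 1 - k : ℕ) : ℝ) ^ j - (((N + 1 - 1 - k : ℕ) : ℝ) - N) ^ j)
        = -((((k : ℝ) - i) ^ j + ((k : ℝ) + i - N) ^ j - (k : ℝ) ^ j - ((k : ℝ) - N) ^ j)) := by
      intro k hkr
      rw [Finset.mem_range] at hkr
      have hk' : k ≤ N := by omega
      have hc : ((N + 1 - 1 - k : ℕ) : ℝ) = (N : ℝ) - k := by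
        have : N + 1 - 1 - k = N - k := by omega
        rw [this, Nat.cast_sub hk']
      rw [hc]
      rw [show (N : ℝ) - k - i = -((k : ℝ) + i - N) by ring,
        show (N : ℝ) - k + i - N = -((k : ℝ) - i) by ring,
        show (N : ℝ) - k - N = -(k : ℝ) by ring,
        show (N : ℝ) - k = -((k : ℝ) - N) by ring]
      rw [hj.neg_pow, hj.neg_pow, hj.neg_pow, hj.neg_pow]
      ring
    rw [hS]
    have h2 := Finset.sum_congr rfl hneg
    rw [h2, Finset.sum_neg_distrib] at hrefl
    linarith [hrefl]
  -- now reindex along m ↦ 2*(m+1)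
  have hinj : Function.Injective (fun m : ℕ => 2 * (m + 1)) := by
    intro a b hab
    simpa using hab
  rw [show (fun m : ℕ => Acoef N i (m + 1) * hbar ^ (2 * (m + 1)))
      = (fun j : ℕ => S j * u ^ j / j.factorial) ∘ (fun m : ℕ => 2 * (m + 1)) by
    funext m
    show Acoef N i (m + 1) * hbar ^ (2 * (m + 1))
      = S (2 * (m + 1)) * u ^ (2 * (m + 1)) / (2 * (m + 1)).factorial
    rw [Acoef, hu, div_pow, hS]
    ring]
  rw [Function.Injective.hasSum_iff hinj]
  · exact hG
  · intro j hj
    simp only [Set.mem_range, not_exists] at hj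
    rcases Nat.even_or_odd j with he | ho
    · obtain ⟨r, rfl⟩ := he
      rcases Nat.eq_zero_or_pos r with rfl | hr
      · simpa using hS0
      · exact absurd (by omega : 2 * ((r - 1) + 1) = r + r) (hj (r - 1))
    · simp [hSodd j ho]
lemma hasSum_log_sinh {w : ℝ} (hw : 0 < w) :
    HasSum (fun n : ℕ => Real.log (1 + w ^ 2 / ((n : ℝ) + 1) ^ 2))
      (Real.log (Real.sinh (π * w) / (π * w))) := by
  have hπw : (0:ℝ) < π * w := mul_pos Real.pi_pos hw
  have hC := Complex.tendsto_euler_sin_prod (w * Complex.I)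
  have hterm : ∀ n : ℕ, (π : ℂ) * ((w : ℂ) * Complex.I) *
      ∏ j ∈ Finset.range n, (1 - ((w : ℂ) * Complex.I) ^ 2 / ((j : ℂ) + 1) ^ 2)
      = (((π * w) * ∏ j ∈ Finset.range n, (1 + w ^ 2 / ((j : ℝ) + 1) ^ 2) : ℝ) : ℂ)
        * Complex.I := by
    intro n
    have hj : ∀ j : ℕ, ((1 : ℂ) - ((w : ℂ) * Complex.I) ^ 2 / ((j : ℂ) + 1) ^ 2)
        = (((1 + w ^ 2 / ((j : ℝ) + 1) ^ 2 : ℝ)) : ℂ) := by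
      intro j
      push_cast
      rw [mul_pow, Complex.I_sq]
      ring
    rw [Finset.prod_congr rfl (fun j _ => hj j), ← Complex.ofReal_prod]
    push_cast
    ring
  have hsin : Complex.sin ((π : ℂ) * ((w : ℂ) * Complex.I))
      = ((Real.sinh (π * w) : ℝ) : ℂ) * Complex.I := by
    rw [show (π : ℂ) * ((w : ℂ) * Complex.I) = ((π * w : ℝ) : ℂ) * Complex.I by push_cast; ring,
      Complex.sin_mul_I, Complex.ofReal_sinh]
  rw [funext hterm, hsin] at hC
  have hstrip : ∀ x : ℂ, x * Complex.I * Complex.I⁻¹ = x := fun x => by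
    rw [mul_assoc, mul_inv_cancel₀ Complex.I_ne_zero, mul_one]
  have h2 := hC.mul_const (Complex.I⁻¹)
  simp only [hstrip] at h2
  have h3 := (Complex.continuous_re.tendsto _).comp h2
  simp only [Function.comp_def, Complex.ofReal_re] at h3
  -- h3 : Tendsto (fun n => π*w * ∏ ...) atTop (𝓝 (sinh (π*w)))
  have hprod : Tendsto (fun n : ℕ => ∏ j ∈ Finset.range n, (1 + w ^ 2 / ((j : ℝ) + 1) ^ 2))
      atTop (𝓝 (Real.sinh (π * w) / (π * w))) := by
    have h4 := h3.div_const (π * w)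
    simpa only [mul_div_cancel_left₀ _ hπw.ne'] using h4
  have hLpos : 0 < Real.sinh (π * w) / (π * w) := div_pos (Real.sinh_pos_iff.mpr hπw) hπw
  have hlog := ((Real.continuousAt_log hLpos.ne').tendsto).comp hprod
  simp only [Function.comp_def] at hlog
  have hposj : ∀ j : ℕ, (0:ℝ) < 1 + w ^ 2 / ((j : ℝ) + 1) ^ 2 := by
    intro j
    have : (0:ℝ) ≤ w ^ 2 / ((j : ℝ) + 1) ^ 2 := by positivity
    linarith
  have hlogprod : ∀ n : ℕ, Real.log (∏ j ∈ Finset.range n, (1 + w ^ 2 / ((j : ℝ) + 1) ^ 2))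
      = ∑ j ∈ Finset.range n, Real.log (1 + w ^ 2 / ((j : ℝ) + 1) ^ 2) :=
    fun n => Real.log_prod (fun j _ => (hposj j).ne')
  rw [funext hlogprod] at hlog
  refine (hasSum_iff_tendsto_nat_of_nonneg (fun j => ?_) _).mpr hlog
  refine Real.log_nonneg ?_
  have : (0:ℝ) ≤ w ^ 2 / ((j : ℝ) + 1) ^ 2 := by positivity
  linarith
lemma neg_one_pow_sum (m : ℕ) : ((-1 : ℝ)) ^ (m + 1) * ((-1 : ℝ)) ^ m = -1 := by
  rw [← pow_add, show m + 1 + m = 2 * m + 1 by ring, pow_succ, pow_mul]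
  norm_num

lemma zval_eq (m : ℕ) : zval (m + 1) = -(bernoulli (2 * (m + 1)) : ℝ) / (2 * (m + 1)) := by
  rw [zval, Bm]
  push_cast
  rw [← mul_assoc, neg_one_pow_sum]
  ring

lemma hasSum_zval_pos {y : ℝ} (hy0 : 0 < y) (hy1 : y < 1) :
    HasSum (fun m : ℕ => zval (m + 1) * y ^ (2 * (m + 1)) / (2 * (m + 1)).factorial)
      (-Real.log (Real.sinh (y / 2) / (y / 2))) := by
  have hπ : (0:ℝ) < π := Real.pi_pos
  set w : ℝ := y / (2 * π) with hwdef
  clear_value w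
  have hw0 : 0 < w := by rw [hwdef]; positivity
  have hw1 : w < 1 := by
    rw [hwdef, div_lt_one (by positivity)]
    nlinarith [Real.pi_gt_three]
  -- the double-indexed family
  set F : ℕ × ℕ → ℝ := fun p =>
    (-1 : ℝ) ^ (p.1 + 1) * (w / ((p.2 : ℝ) + 1)) ^ (2 * (p.1 + 1)) / (p.1 + 1) with hF
  clear_value F
  -- row sums
  have hrow : ∀ m : ℕ, HasSum (fun n : ℕ => F (m, n))
      (zval (m + 1) * y ^ (2 * (m + 1)) / (2 * (m + 1)).factorial) := by
    intro m
    have hz := hasSum_zeta_nat (k := m + 1) (Nat.succ_ne_zero m)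
    have h0 : (1 : ℝ) / ((0 : ℕ) : ℝ) ^ (2 * (m + 1)) = 0 := by
      rw [Nat.cast_zero, zero_pow (by omega), div_zero]
    have hshift : HasSum (fun n : ℕ => 1 / (((n + 1 : ℕ) : ℝ)) ^ (2 * (m + 1)))
        ((-1 : ℝ) ^ (m + 1 + 1) * (2 : ℝ) ^ (2 * (m + 1) - 1) * π ^ (2 * (m + 1)) *
          (bernoulli (2 * (m + 1)) : ℝ) / (2 * (m + 1)).factorial) := by
      refine (hasSum_nat_add_iff (f := fun n : ℕ => 1 / ((n : ℝ)) ^ (2 * (m + 1))) 1).mpr ?_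
      simpa [h0] using hz
    set C : ℝ := (-1 : ℝ) ^ (m + 1) * w ^ (2 * (m + 1)) / (m + 1) with hC
    clear_value C
    have hmul := hshift.mul_left C
    have hfun : (fun n : ℕ => C * (1 / (((n + 1 : ℕ) : ℝ)) ^ (2 * (m + 1))))
        = fun n : ℕ => F (m, n) := by
      funext n
      have hn1 : ((n:ℝ) + 1) ≠ 0 := by positivity
      rw [hF, hC]
      push_cast
      rw [div_pow]
      field_simp
    rw [hfun] at hmul
    convert hmul using 1
    on_goal 1 => rfl
    -- value identity
    have h2 : (2 : ℝ) ^ (2 * (m + 1) - 1) = 2 ^ (2 * (m + 1)) / 2 := by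
      rw [eq_div_iff (two_ne_zero), ← pow_succ, Nat.sub_add_cancel (by omega)]
    have hwpow : w ^ (2 * (m + 1)) = y ^ (2 * (m + 1)) / (2 ^ (2 * (m + 1)) * π ^ (2 * (m + 1))) := by
      rw [hwdef, div_pow, mul_pow]
    have hs1 : ((-1 : ℝ)) ^ (m + 1) * ((-1 : ℝ)) ^ (m + 1 + 1) = -1 := by
      rw [← pow_add, show m + 1 + (m + 1 + 1) = 2 * (m + 1) + 1 by ring, pow_succ, pow_mul]
      norm_num
    have hfac : ((2 * (m + 1)).factorial : ℝ) ≠ 0 := Nat.cast_ne_zero.mpr (Nat.factorial_ne_zero _)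
    have hm1 : ((m : ℝ) + 1) ≠ 0 := by positivity
    have hstep : C * ((-1 : ℝ) ^ (m + 1 + 1) * (2 : ℝ) ^ (2 * (m + 1) - 1) * π ^ (2 * (m + 1)) *
          (bernoulli (2 * (m + 1)) : ℝ) / (2 * (m + 1)).factorial)
        = ((-1 : ℝ) ^ (m + 1) * (-1 : ℝ) ^ (m + 1 + 1)) *
          (y ^ (2 * (m + 1)) * (bernoulli (2 * (m + 1)) : ℝ))
            / (2 * ((m : ℝ) + 1) * (2 * (m + 1)).factorial) := by
      rw [hC, h2, hwpow]
      field_simp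
    rw [hstep, hs1, zval_eq]
    push_cast
    field_simp
  -- column sums
  have hw2 : w ^ 2 < 1 := by nlinarith
  have hcol : ∀ n : ℕ, HasSum (fun m : ℕ => F (m, n))
      (-Real.log (1 + (w / ((n : ℝ) + 1)) ^ 2)) := by
    intro n
    have hn1 : (0:ℝ) < (n : ℝ) + 1 := by positivity
    have htle : w / ((n : ℝ) + 1) ≤ w := by
      rw [div_le_iff₀ hn1]
      nlinarith
    have ht0 : 0 < w / ((n : ℝ) + 1) := by positivity
    have ht1 : (w / ((n : ℝ) + 1)) ^ 2 < 1 := by nlinarith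
    have habs : |(-((w / ((n : ℝ) + 1)) ^ 2))| < 1 := by
      rw [abs_neg, abs_of_pos (by positivity)]
      exact ht1
    have h := hasSum_pow_div_log_of_abs_lt_one habs
    rw [sub_neg_eq_add] at h
    have hfun2 : (fun m : ℕ => F (m, n))
        = fun m : ℕ => (-((w / ((n : ℝ) + 1)) ^ 2)) ^ (m + 1) / ((m : ℝ) + 1) := by
      funext m
      rw [hF, neg_pow, ← pow_mul]
    rw [hfun2]
    exact h
  -- summability of the double family
  have hS2sum : Summable (fun n : ℕ => 1 / ((n : ℝ) + 1) ^ 2) := by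
    have h := (summable_nat_add_iff (f := fun n : ℕ => 1 / (n : ℝ) ^ 2) 1).mpr
      hasSum_zeta_two.summable
    have heq : (fun n : ℕ => 1 / (((n + 1 : ℕ) : ℝ)) ^ 2) = fun n : ℕ => 1 / ((n : ℝ) + 1) ^ 2 := by
      funext n
      push_cast
      ring
    rwa [heq] at h
  set S2 : ℝ := ∑' n : ℕ, 1 / ((n : ℝ) + 1) ^ 2 with hS2def
  have habs_row : ∀ m : ℕ, Summable fun n : ℕ => |F (m, n)| := fun m => (hrow m).summable.abs
  have hbound : ∀ m n : ℕ, |F (m, n)| ≤ w ^ (2 * (m + 1)) * (1 / ((n : ℝ) + 1) ^ 2) := by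
    intro m n
    have hn1 : (0:ℝ) < (n : ℝ) + 1 := by positivity
    have hb1 : |F (m, n)| = (w / ((n : ℝ) + 1)) ^ (2 * (m + 1)) / ((m : ℝ) + 1) := by
      rw [hF]
      rw [abs_div, abs_mul, abs_pow, abs_neg, abs_one, one_pow, one_mul,
        abs_of_nonneg (by positivity : (0:ℝ) ≤ (w / ((n : ℝ) + 1)) ^ (2 * (m + 1))),
        abs_of_pos (by positivity : (0:ℝ) < (m : ℝ) + 1)]
    rw [hb1]
    have hb2 : (w / ((n : ℝ) + 1)) ^ (2 * (m + 1)) / ((m : ℝ) + 1)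
        ≤ (w / ((n : ℝ) + 1)) ^ (2 * (m + 1)) := by
      apply div_le_self (by positivity)
      simp
    refine le_trans hb2 ?_
    rw [div_pow]
    have hb3 : ((n : ℝ) + 1) ^ 2 ≤ ((n : ℝ) + 1) ^ (2 * (m + 1)) :=
      pow_le_pow_right₀ (by simp) (by omega)
    calc w ^ (2 * (m + 1)) / ((n : ℝ) + 1) ^ (2 * (m + 1))
        ≤ w ^ (2 * (m + 1)) / ((n : ℝ) + 1) ^ 2 :=
          div_le_div_of_nonneg_left (by positivity) (by positivity) hb3
      _ = w ^ (2 * (m + 1)) * (1 / ((n : ℝ) + 1) ^ 2) := by ring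
  have hrowsum_le : ∀ m : ℕ, (∑' n : ℕ, |F (m, n)|) ≤ S2 * w ^ (2 * (m + 1)) := by
    intro m
    have h1 := Summable.tsum_le_tsum (hbound m) (habs_row m) (hS2sum.mul_left (w ^ (2 * (m + 1))))
    rwa [tsum_mul_left, mul_comm (w ^ (2 * (m + 1)))] at h1
  have hgeo : Summable (fun m : ℕ => S2 * w ^ (2 * (m + 1))) := by
    have h1 : Summable (fun m : ℕ => (S2 * w ^ 2) * (w ^ 2) ^ m) :=
      (summable_geometric_of_lt_one (by positivity) hw2).mul_left _
    have heq : (fun m : ℕ => (S2 * w ^ 2) * (w ^ 2) ^ m)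
        = fun m : ℕ => S2 * w ^ (2 * (m + 1)) := by
      funext m
      rw [← pow_mul, show 2 * (m + 1) = 2 * m + 2 by ring, pow_add, mul_comm 2 m]
      ring
    rwa [heq] at h1
  have habsF : Summable fun p : ℕ × ℕ => |F p| := by
    refine (summable_prod_of_nonneg (fun p => abs_nonneg _)).mpr ⟨fun m => habs_row m, ?_⟩
    exact Summable.of_nonneg_of_le (fun m => tsum_nonneg (fun n => abs_nonneg _)) hrowsum_le hgeo
  have hFsum : Summable F := by
    have : Summable fun p : ℕ × ℕ => ‖F p‖ := by
      simpa only [Real.norm_eq_abs] using habsF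
    exact this.of_norm
  -- Fubini
  have h1 : HasSum (fun m : ℕ => zval (m + 1) * y ^ (2 * (m + 1)) / (2 * (m + 1)).factorial)
      (∑' p : ℕ × ℕ, F p) := HasSum.prod_fiberwise hFsum.hasSum hrow
  have hswap : Summable fun p : ℕ × ℕ => F p.swap := hFsum.prod_symm
  have h2 : HasSum (fun n : ℕ => -Real.log (1 + (w / ((n : ℝ) + 1)) ^ 2))
      (∑' p : ℕ × ℕ, F p.swap) := HasSum.prod_fiberwise hswap.hasSum (fun n => hcol n)
  have hswap_eq : (∑' p : ℕ × ℕ, F p.swap) = ∑' p : ℕ × ℕ, F p :=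
    Equiv.tsum_eq (Equiv.prodComm ℕ ℕ) F
  have h3 := (hasSum_log_sinh hw0).neg
  have heq3 : (fun n : ℕ => -Real.log (1 + (w / ((n : ℝ) + 1)) ^ 2))
      = fun n : ℕ => -Real.log (1 + w ^ 2 / ((n : ℝ) + 1) ^ 2) := by
    funext n
    rw [div_pow]
  rw [heq3, hswap_eq] at h2
  have hval : (∑' p : ℕ × ℕ, F p) = -Real.log (Real.sinh (π * w) / (π * w)) := h2.unique h3
  rw [hval] at h1
  have hyw : π * w = y / 2 := by
    rw [hwdef]
    field_simp
  rwa [hyw] at h1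

lemma hasSum_zval {y : ℝ} (hy : y ≠ 0) (hy1 : |y| < 1) :
    HasSum (fun m : ℕ => zval (m + 1) * y ^ (2 * (m + 1)) / (2 * (m + 1)).factorial)
      (-Real.log (Real.sinh (y / 2) / (y / 2))) := by
  rcases hy.lt_or_gt with hneg | hpos
  · have h := hasSum_zval_pos (y := -y) (by linarith) (by rw [abs_of_neg hneg] at hy1; linarith)
    have hterm : (fun m : ℕ => zval (m + 1) * (-y) ^ (2 * (m + 1)) / (2 * (m + 1)).factorial)
        = fun m : ℕ => zval (m + 1) * y ^ (2 * (m + 1)) / (2 * (m + 1)).factorial := by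
      funext m
      rw [Even.neg_pow ⟨m + 1, by ring⟩]
    have hs : Real.sinh (-y / 2) / (-y / 2) = Real.sinh (y / 2) / (y / 2) := by
      rw [neg_div, Real.sinh_neg, neg_div_neg_eq]
    rw [hterm, hs] at h
    exact h
  · exact hasSum_zval_pos hpos (by rwa [abs_of_pos hpos] at hy1)


set_option maxHeartbeats 2000000 in
/-- The ζ-regularization identity
`f^{i,i}_{ζ-reg}(1)^{1/2} = binom(N,i)⁻¹·[N choose i]`: if `a^i_{2m}` are the coefficients of
`(1-q^n)(1-t^{-n})((1-p^{in})/(1-p^n))((1-p^{(N-i)n})/(1-p^{Nn})) = ∑_{m>0} a^i_{2m} (nhbar)^{2m}`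
(with `q = e^hbar`, `t = q^{(N+1)/N}`, `p = e^{-hbar/N}`), then for all sufficiently small `hbar ≠ 0`,
`exp((1/2) ∑_{m>0} a^i_{2m} ζ(1-2m) hbar^{2m}) = binom(N,i)⁻¹ [N choose i]_p`. -/
theorem zeta_reg_identity (N i : ℕ) (hN : 2 ≤ N) (hi1 : 1 ≤ i) (hi2 : i ≤ N - 1)
    (a : ℕ → ℝ)
    (ha : ∃ δ > (0 : ℝ), ∀ hbar : ℝ, |hbar| < δ → ∀ n : ℕ, 1 ≤ n →
      HasSum (fun m : ℕ => a (m + 1) * ((n : ℝ) * hbar) ^ (2 * (m + 1))) (Fexp N i hbar n)) :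
    ∃ ε > (0 : ℝ), ∀ hbar : ℝ, 0 < |hbar| → |hbar| < ε →
      Real.exp (∑' m : ℕ, (1 / 2) * a (m + 1) * zval (m + 1) * hbar ^ (2 * (m + 1))) =
        ((Nat.choose N i : ℝ))⁻¹ * qbinom N hbar i := by
  obtain ⟨δ, hδ0, hδ⟩ := ha
  have hN0 : 0 < N := by omega
  have hNR : (0:ℝ) < N := Nat.cast_pos.mpr hN0
  have hiN : i ≤ N := by omega
  -- identify the coefficients
  have haA : ∀ m : ℕ, a (m + 1) = Acoef N i (m + 1) := by
    have hρ : (0:ℝ) < min δ 1 := lt_min hδ0 one_pos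
    have hz := coeff_eq_zero (c := fun k : ℕ => a (k + 1) - Acoef N i (k + 1))
      (ρ := (min δ 1) ^ 2) (by positivity) ?_
    · intro m
      have h := hz m
      have : a (m + 1) - Acoef N i (m + 1) = 0 := h
      linarith
    · intro x hx0 hxρ
      have hh0 : 0 < Real.sqrt x := Real.sqrt_pos.mpr hx0
      have hh2 : Real.sqrt x ^ 2 = x := Real.sq_sqrt hx0.le
      have hhlt : Real.sqrt x < min δ 1 := by
        have h := Real.sqrt_lt_sqrt hx0.le hxρ
        rwa [Real.sqrt_sq hρ.le] at h
      have hhδ : |Real.sqrt x| < δ := by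
        rw [abs_of_pos hh0]
        exact lt_of_lt_of_le hhlt (min_le_left _ _)
      have h1 := hδ (Real.sqrt x) hhδ 1 le_rfl
      have h1' : HasSum (fun m : ℕ => a (m + 1) * Real.sqrt x ^ (2 * (m + 1)))
          (Fexp N i (Real.sqrt x) 1) := by
        simpa using h1
      have h2 := hasSum_Acoef N i hN hi1 hi2 (Real.sqrt x) hh0.ne'
      have h3 := h1'.sub h2
      rw [sub_self] at h3
      have heq : (fun m : ℕ => (a (m + 1) - Acoef N i (m + 1)) * x ^ m * x)
          = fun m : ℕ => a (m + 1) * Real.sqrt x ^ (2 * (m + 1))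
            - Acoef N i (m + 1) * Real.sqrt x ^ (2 * (m + 1)) := by
        funext m
        rw [pow_mul, hh2]
        ring
      have h4 : HasSum (fun m : ℕ => (a (m + 1) - Acoef N i (m + 1)) * x ^ m * x) 0 := by
        rw [heq]
        exact h3
      have h5 := h4.mul_right x⁻¹
      rw [zero_mul] at h5
      have heq2 : (fun m : ℕ => (a (m + 1) - Acoef N i (m + 1)) * x ^ m)
          = fun m : ℕ => (a (m + 1) - Acoef N i (m + 1)) * x ^ m * x * x⁻¹ := by
        funext m
        rw [mul_assoc _ x x⁻¹, mul_inv_cancel₀ hx0.ne', mul_one]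
      rw [heq2]
      exact h5
  refine ⟨min δ 1, lt_min hδ0 one_pos, fun hbar habs0 habsε => ?_⟩
  have hh0 : hbar ≠ 0 := by
    intro hc
    rw [hc, abs_zero] at habs0
    exact lt_irrefl _ habs0
  have hh1 : |hbar| < 1 := lt_of_lt_of_le habsε (min_le_right _ _)
  set V : ℝ → ℝ := fun c => Real.log (Real.sinh (c * hbar / (2 * N)) / (c * hbar / (2 * N)))
    with hV
  clear_value V
  have hVapp : ∀ c : ℝ, V c = Real.log (Real.sinh (c * hbar / (2 * N)) / (c * hbar / (2 * N))) :=
    fun c => by rw [hV]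
  have hVe : ∀ x : ℝ, V (-x) = V x := by
    intro x
    rw [hVapp, hVapp, show -x * hbar / (2 * (N:ℝ)) = -(x * hbar / (2 * N)) by ring,
      Real.sinh_neg, neg_div_neg_eq]
  have hV0 : V 0 = 0 := by
    rw [hVapp]
    simp
  -- the per-coefficient sums
  have hLc : ∀ c : ℝ, |c| ≤ N → HasSum
      (fun m : ℕ => zval (m + 1) * (c * hbar / N) ^ (2 * (m + 1)) / (2 * (m + 1)).factorial)
      (-(V c)) := by
    intro c hc
    rcases eq_or_ne c 0 with rfl | hc0
    · rw [hV0, neg_zero]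
      have hfun : (fun m : ℕ => zval (m + 1) * ((0:ℝ) * hbar / N) ^ (2 * (m + 1))
          / (2 * (m + 1)).factorial) = fun _ : ℕ => (0:ℝ) := by
        funext m
        rw [zero_mul, zero_div, zero_pow (by omega : 2 * (m + 1) ≠ 0), mul_zero, zero_div]
      rw [hfun]
      exact hasSum_zero
    · have hy0 : c * hbar / N ≠ 0 := div_ne_zero (mul_ne_zero hc0 hh0) hNR.ne'
      have hy1 : |c * hbar / N| < 1 := by
        rw [abs_div, abs_mul, abs_of_pos hNR, div_lt_one hNR]
        calc |c| * |hbar| ≤ (N:ℝ) * |hbar| := mul_le_mul_of_nonneg_right hc (abs_nonneg _)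
          _ < (N:ℝ) * 1 := mul_lt_mul_of_pos_left hh1 hNR
          _ = N := mul_one _
      have h := hasSum_zval hy0 hy1
      rw [show c * hbar / (N:ℝ) / 2 = c * hbar / (2 * N) by ring] at h
      rw [hVapp]
      exact h
  -- combine over k
  have hcomb : ∀ k ∈ Finset.range (N + 1), HasSum
      (fun m : ℕ =>
        zval (m+1) * (((k:ℝ) - i) * hbar / N) ^ (2*(m+1)) / (2*(m+1)).factorial
        + zval (m+1) * (((k:ℝ) + i - N) * hbar / N) ^ (2*(m+1)) / (2*(m+1)).factorial
        - zval (m+1) * ((k:ℝ) * hbar / N) ^ (2*(m+1)) / (2*(m+1)).factorial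
        - zval (m+1) * (((k:ℝ) - N) * hbar / N) ^ (2*(m+1)) / (2*(m+1)).factorial)
      (-(V ((k:ℝ) - i)) + -(V ((k:ℝ) + i - N)) - -(V (k:ℝ)) - -(V ((k:ℝ) - N))) := by
    intro k hk
    rw [Finset.mem_range] at hk
    have hkN : (k:ℝ) ≤ N := Nat.cast_le.mpr (by omega)
    have hiNR : (i:ℝ) ≤ N := Nat.cast_le.mpr hiN
    have hk0 : (0:ℝ) ≤ k := Nat.cast_nonneg k
    have hi0 : (0:ℝ) ≤ i := Nat.cast_nonneg i
    have b1 : |(k:ℝ) - i| ≤ N := abs_le.mpr ⟨by linarith, by linarith⟩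
    have b2 : |(k:ℝ) + i - N| ≤ N := abs_le.mpr ⟨by linarith, by linarith⟩
    have b3 : |(k:ℝ)| ≤ N := abs_le.mpr ⟨by linarith, by linarith⟩
    have b4 : |(k:ℝ) - N| ≤ N := abs_le.mpr ⟨by linarith, by linarith⟩
    exact (((hLc _ b1).add (hLc _ b2)).sub (hLc _ b3)).sub (hLc _ b4)
  have hsumk := (hasSum_sum hcomb).mul_left (1/2 : ℝ)
  have hfeq : (fun m : ℕ => (1/2 : ℝ) * a (m + 1) * zval (m + 1) * hbar ^ (2 * (m + 1)))
      = fun m : ℕ => (1/2 : ℝ) * (∑ k ∈ Finset.range (N + 1),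
        (zval (m+1) * (((k:ℝ) - i) * hbar / N) ^ (2*(m+1)) / (2*(m+1)).factorial
        + zval (m+1) * (((k:ℝ) + i - N) * hbar / N) ^ (2*(m+1)) / (2*(m+1)).factorial
        - zval (m+1) * ((k:ℝ) * hbar / N) ^ (2*(m+1)) / (2*(m+1)).factorial
        - zval (m+1) * (((k:ℝ) - N) * hbar / N) ^ (2*(m+1)) / (2*(m+1)).factorial)) := by
    funext m
    have hterm : ∀ k ∈ Finset.range (N + 1),
        (zval (m+1) * (((k:ℝ) - i) * hbar / N) ^ (2*(m+1)) / (2*(m+1)).factorial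
        + zval (m+1) * (((k:ℝ) + i - N) * hbar / N) ^ (2*(m+1)) / (2*(m+1)).factorial
        - zval (m+1) * ((k:ℝ) * hbar / N) ^ (2*(m+1)) / (2*(m+1)).factorial
        - zval (m+1) * (((k:ℝ) - N) * hbar / N) ^ (2*(m+1)) / (2*(m+1)).factorial)
        = (((k:ℝ) - i) ^ (2*(m+1)) + ((k:ℝ) + i - N) ^ (2*(m+1))
            - (k:ℝ) ^ (2*(m+1)) - ((k:ℝ) - N) ^ (2*(m+1)))
          * (zval (m+1) * hbar ^ (2*(m+1)) / ((N:ℝ) ^ (2*(m+1)) * (2*(m+1)).factorial)) := by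
      intro k _
      rw [div_pow, div_pow, div_pow, div_pow, mul_pow, mul_pow, mul_pow, mul_pow]
      have hfac : ((2*(m+1)).factorial : ℝ) ≠ 0 := Nat.cast_ne_zero.mpr (Nat.factorial_ne_zero _)
      have hNp : ((N:ℝ)) ^ (2*(m+1)) ≠ 0 := pow_ne_zero _ hNR.ne'
      field_simp
    rw [Finset.sum_congr rfl hterm, ← Finset.sum_mul, haA m, Acoef]
    ring
  rw [hfeq, hsumk.tsum_eq]
  -- split the sum
  have hsum_split : ∑ k ∈ Finset.range (N + 1),
      (-(V ((k:ℝ) - i)) + -(V ((k:ℝ) + i - N)) - -(V (k:ℝ)) - -(V ((k:ℝ) - N)))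
      = ((∑ k ∈ Finset.range (N + 1), V (k:ℝ)) + ∑ k ∈ Finset.range (N + 1), V ((k:ℝ) - N))
        - ((∑ k ∈ Finset.range (N + 1), V ((k:ℝ) - i))
          + ∑ k ∈ Finset.range (N + 1), V ((k:ℝ) + i - N)) := by
    rw [← Finset.sum_add_distrib, ← Finset.sum_add_distrib, ← Finset.sum_sub_distrib]
    apply Finset.sum_congr rfl
    intro k _
    ring
  have e1 : ∑ k ∈ Finset.range (N + 1), V ((k:ℝ) - i)
      = (∑ k ∈ Finset.range (i + 1), V k) + ∑ k ∈ Finset.range (N - i + 1), V k :=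
    sum_reflect_split V hVe hV0 N i hiN
  have e2 : ∑ k ∈ Finset.range (N + 1), V ((k:ℝ) + i - N)
      = (∑ k ∈ Finset.range (N - i + 1), V k) + ∑ k ∈ Finset.range (i + 1), V k := by
    have h := sum_reflect_split V hVe hV0 N (N - i) (by omega)
    have hc : ∀ k ∈ Finset.range (N + 1), V ((k:ℝ) - ((N - i : ℕ) : ℝ))
        = V ((k:ℝ) + i - N) := by
      intro k _
      rw [Nat.cast_sub hiN]
      ring_nf
    rw [Finset.sum_congr rfl hc, show N - (N - i) = i by omega] at h
    exact h
  have e4 : ∑ k ∈ Finset.range (N + 1), V ((k:ℝ) - N)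
      = ∑ k ∈ Finset.range (N + 1), V (k:ℝ) := by
    have h := sum_reflect_split V hVe hV0 N N le_rfl
    rw [Nat.sub_self, Finset.sum_range_one, Nat.cast_zero, hV0, add_zero] at h
    exact h
  have hT : (1/2 : ℝ) * ∑ k ∈ Finset.range (N + 1),
      (-(V ((k:ℝ) - i)) + -(V ((k:ℝ) + i - N)) - -(V (k:ℝ)) - -(V ((k:ℝ) - N)))
      = (∑ k ∈ Finset.range (N + 1), V (k:ℝ)) - (∑ k ∈ Finset.range (i + 1), V k)
        - ∑ k ∈ Finset.range (N - i + 1), V k := by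
    rw [hsum_split, e1, e2, e4]
    ring
  rw [hT, Real.exp_sub, Real.exp_sub]
  -- evaluate the exponentials of partial sums
  have hshne : ∀ x : ℝ, x ≠ 0 → Real.sinh x ≠ 0 := by
    intro x hx
    rcases hx.lt_or_gt with hneg | hpos
    · exact (Real.sinh_neg_iff.mpr hneg).ne
    · exact (Real.sinh_pos_iff.mpr hpos).ne'
  have hψpos : ∀ x : ℝ, x ≠ 0 → 0 < Real.sinh x / x := by
    intro x hx
    rcases hx.lt_or_gt with hneg | hpos
    · exact div_pos_of_neg_of_neg (Real.sinh_neg_iff.mpr hneg) hneg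
    · exact div_pos (Real.sinh_pos_iff.mpr hpos) hpos
  have hsh0 : Real.sinh (hbar / (2 * N)) ≠ 0 :=
    hshne _ (div_ne_zero hh0 (by positivity))
  have hexp : ∀ n : ℕ, Real.exp (∑ k ∈ Finset.range (n + 1), V (k:ℝ))
      = qfact N hbar n * (Real.sinh (hbar / (2 * N)) * (2 * N) / hbar) ^ n / n.factorial := by
    intro n
    rw [Real.exp_sum]
    have hins : Finset.range (n + 1) = insert 0 (Finset.Icc 1 n) := by
      ext x
      simp only [Finset.mem_range, Finset.mem_insert, Finset.mem_Icc]
      omega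
    rw [hins, Finset.prod_insert (by simp), Nat.cast_zero, hV0, Real.exp_zero, one_mul]
    have hprod1 : ∀ k ∈ Finset.Icc 1 n, Real.exp (V (k:ℝ))
        = qnum N hbar k * (Real.sinh (hbar / (2 * N)) * (2 * N) / hbar) * ((k:ℝ))⁻¹ := by
      intro k hk
      rw [Finset.mem_Icc] at hk
      have hkR : (0:ℝ) < k := Nat.cast_pos.mpr (by omega)
      have hx : (k:ℝ) * hbar / (2 * N) ≠ 0 :=
        div_ne_zero (mul_ne_zero hkR.ne' hh0) (by positivity)
      rw [hVapp, Real.exp_log (hψpos _ hx), qnum]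
      field_simp
    rw [Finset.prod_congr rfl hprod1, Finset.prod_mul_distrib, Finset.prod_mul_distrib,
      Finset.prod_const, Finset.prod_inv_distrib]
    have hcard : (Finset.Icc 1 n).card = n := by
      rw [Nat.card_Icc]
      omega
    have hfacprod : ∏ k ∈ Finset.Icc 1 n, (k:ℝ) = (n.factorial : ℝ) := by
      rw [← Nat.cast_prod]
      congr 1
      rw [← Finset.Ico_add_one_right_eq_Icc, Finset.prod_Ico_id_eq_factorial]
    rw [hcard, hfacprod, qfact, div_eq_mul_inv]
    ring
  rw [hexp N, hexp i]
  have hNi : N - i + 1 = (N - i) + 1 := rfl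
  rw [hNi, hexp (N - i)]
  -- final algebra
  set X : ℝ := Real.sinh (hbar / (2 * N)) * (2 * N) / hbar with hX
  have hX0 : X ≠ 0 := by
    rw [hX]
    exact div_ne_zero (mul_ne_zero hsh0 (by positivity)) hh0
  clear_value X
  have hqn : ∀ k : ℕ, 1 ≤ k → qnum N hbar k ≠ 0 := by
    intro k hk
    rw [qnum]
    have hkR : (0:ℝ) < k := Nat.cast_pos.mpr (by omega)
    exact div_ne_zero (hshne _ (div_ne_zero (mul_ne_zero hkR.ne' hh0) (by positivity))) hsh0
  have hqf : ∀ n : ℕ, qfact N hbar n ≠ 0 := by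
    intro n
    rw [qfact]
    exact Finset.prod_ne_zero_iff.mpr (fun k hk => hqn k (Finset.mem_Icc.mp hk).1)
  have hXpow : X ^ i * X ^ (N - i) = X ^ N := by
    rw [← pow_add]
    congr 1
    omega
  have hfact : ((N.choose i : ℝ)) * (i.factorial : ℝ) * ((N - i).factorial : ℝ)
      = (N.factorial : ℝ) := by
    exact_mod_cast Nat.choose_mul_factorial_mul_factorial hiN
  have hch0 : (N.choose i : ℝ) ≠ 0 := Nat.cast_ne_zero.mpr (Nat.choose_pos hiN).ne'
  have hfN : (N.factorial : ℝ) ≠ 0 := Nat.cast_ne_zero.mpr (Nat.factorial_ne_zero _)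
  have hfi : (i.factorial : ℝ) ≠ 0 := Nat.cast_ne_zero.mpr (Nat.factorial_ne_zero _)
  have hfNi : ((N - i).factorial : ℝ) ≠ 0 := Nat.cast_ne_zero.mpr (Nat.factorial_ne_zero _)
  have hchinv : ((N.choose i : ℝ))⁻¹
      = (i.factorial : ℝ) * ((N - i).factorial : ℝ) / (N.factorial : ℝ) := by
    rw [eq_div_iff hfN, ← hfact]
    field_simp
  rw [qbinom, hchinv, ← hXpow]
  have hPi : X ^ i ≠ 0 := pow_ne_zero _ hX0
  have hQi : X ^ (N - i) ≠ 0 := pow_ne_zero _ hX0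
  set P : ℝ := X ^ i with hP
  set Q : ℝ := X ^ (N - i) with hQ
  clear_value P Q
  have hcP : P * P⁻¹ = 1 := mul_inv_cancel₀ hPi
  have hcQ : Q * Q⁻¹ = 1 := mul_inv_cancel₀ hQi
  field_simp
end

section
/- Let x/(e^x - 1) + x/2 = 1 + Σ_{n≥1} (-1)^{n-1} B_n x^{2n}/(2n)! define Bernoulli numbers B_n. Then for any positive integer n and real x with 0 < |x| < π/n, log(sinh(nx)/(n sinh x)) = Σ_{m≥1} (-1)^{m-1} (2^{2m-1} B_m/((2m)! m)) (n^{2m}-1) x^{2m}. -/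
open Filter Real Topology Finset

/-- Euler-type product for sinh: partial products tend to `sinh y / y`. -/
lemma sinh_euler_prod (y : ℝ) (hy : y ≠ 0) :
    Tendsto (fun K : ℕ => ∏ j ∈ Finset.range K, (1 + (y / π) ^ 2 / ((j : ℝ) + 1) ^ 2))
      atTop (𝓝 (Real.sinh y / y)) := by
  have hπ : (π : ℝ) ≠ 0 := Real.pi_ne_zero
  have h := Complex.tendsto_euler_sin_prod (((y / π : ℝ) : ℂ) * Complex.I)
  have h1 : (↑π * (((y / π : ℝ) : ℂ) * Complex.I)) = (y : ℂ) * Complex.I := by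
    push_cast
    field_simp
  rw [h1, Complex.sin_mul_I] at h
  have h2 : ∀ K : ℕ, ((y : ℂ) * Complex.I *
      ∏ j ∈ Finset.range K, ((1 : ℂ) - (((y / π : ℝ) : ℂ) * Complex.I) ^ 2 / ((j : ℂ) + 1) ^ 2))
      = (y : ℂ) * Complex.I *
        ((∏ j ∈ Finset.range K, (1 + (y / π) ^ 2 / ((j : ℝ) + 1) ^ 2) : ℝ) : ℂ) := by
    intro K
    congr 1
    push_cast
    refine Finset.prod_congr rfl fun j _ => ?_
    rw [mul_pow, Complex.I_sq]
    ring
  rw [tendsto_congr h2] at h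
  have hyI : (y : ℂ) * Complex.I ≠ 0 := by
    simp [Complex.ofReal_ne_zero.mpr hy, Complex.I_ne_zero]
  have h3 := h.const_mul ((y : ℂ) * Complex.I)⁻¹
  have h4 : ∀ K : ℕ, ((y : ℂ) * Complex.I)⁻¹ * ((y : ℂ) * Complex.I *
      ((∏ j ∈ Finset.range K, (1 + (y / π) ^ 2 / ((j : ℝ) + 1) ^ 2) : ℝ) : ℂ))
      = ((∏ j ∈ Finset.range K, (1 + (y / π) ^ 2 / ((j : ℝ) + 1) ^ 2) : ℝ) : ℂ) := by
    intro K; rw [← mul_assoc, inv_mul_cancel₀ hyI, one_mul]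
  rw [tendsto_congr h4] at h3
  have h5 : ((y : ℂ) * Complex.I)⁻¹ * (Complex.sinh y * Complex.I)
      = ((Real.sinh y / y : ℝ) : ℂ) := by
    rw [← Complex.ofReal_sinh]
    push_cast
    field_simp
  rw [h5] at h3
  exact tendsto_ofReal_iff.mp h3

lemma final_alg (A c P B F mm NB X : ℝ) (hP : P ≠ 0) (hF : F ≠ 0) (hmm : mm ≠ 0) :
    A * (NB * X / P - X / P) / mm * (A * c * P * B / F)
      = A * c * (A * B) / (F * mm) * (NB - 1) * X := by
  field_simp



/-- For an integer `n ≥ 1` and real `x` with `0 < |x| < π/n`,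
`log(sinh(nx)/(n sinh x)) = ∑_{m≥1} (-1)^{m-1} (2^{2m-1} B_m/((2m)! m)) (n^{2m}-1) x^{2m}`. -/
theorem log_sinh_ratio (n : ℕ) (hn : 1 ≤ n) (x : ℝ) (h0 : 0 < |x|)
    (hx : |x| < Real.pi / n) :
    Real.log (Real.sinh ((n : ℝ) * x) / ((n : ℝ) * Real.sinh x)) =
      ∑' m : ℕ, (-1 : ℝ) ^ m * 2 ^ (2 * (m + 1) - 1) * (Bm (m + 1) : ℝ) /
        ((Nat.factorial (2 * (m + 1)) : ℝ) * ((m : ℝ) + 1)) *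
        ((n : ℝ) ^ (2 * (m + 1)) - 1) * x ^ (2 * (m + 1)) := by
  have hπ : (0:ℝ) < π := Real.pi_pos
  have hx0 : x ≠ 0 := by
    intro h; rw [h] at h0; simp at h0
  have hnR : (0:ℝ) < n := by exact_mod_cast Nat.lt_of_lt_of_le Nat.zero_lt_one hn
  have hn1 : (1:ℝ) ≤ n := by exact_mod_cast hn
  have hnx0 : (n:ℝ) * x ≠ 0 := mul_ne_zero (ne_of_gt hnR) hx0
  set r : ℝ := ((n:ℝ) * x / π) ^ 2 with hr
  have hr1 : r < 1 := by
    have h1 : (n:ℝ) * |x| < π := by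
      rw [lt_div_iff₀ hnR] at hx
      linarith [mul_comm (n:ℝ) |x|] 
    have h2 : |(n:ℝ) * x / π| < 1 := by
      rw [abs_div, abs_mul, abs_of_pos hπ, Nat.abs_cast, div_lt_one hπ]
      exact h1
    calc r = |(n:ℝ) * x / π| ^ 2 := (sq_abs _).symm
    _ < 1 := by nlinarith [abs_nonneg ((n:ℝ) * x / π)]
  have hr0 : 0 < r := by positivity
  set a : ℕ → ℝ := fun k => ((n:ℝ) * x / π) ^ 2 / ((k:ℝ) + 1) ^ 2 with ha
  set b : ℕ → ℝ := fun k => (x / π) ^ 2 / ((k:ℝ) + 1) ^ 2 with hb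
  have hk1 : ∀ k : ℕ, (1:ℝ) ≤ ((k:ℝ) + 1) ^ 2 := by
    intro k
    nlinarith [Nat.cast_nonneg (α := ℝ) k]
  have hapos : ∀ k, 0 < a k := fun k => by
    have := hk1 k; positivity
  have hbpos : ∀ k, 0 < b k := fun k => by
    have := hk1 k
    have : x / π ≠ 0 := div_ne_zero hx0 (ne_of_gt hπ)
    positivity
  have hba : ∀ k, b k ≤ a k := by
    intro k
    have hxx : (x / π) ^ 2 ≤ ((n:ℝ) * x / π) ^ 2 := by
      rw [div_pow, div_pow, mul_pow]
      apply div_le_div_of_nonneg_right ?_ (by positivity)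
      nlinarith [sq_nonneg x, sq_nonneg ((n:ℝ) - 1)]
    exact div_le_div_of_nonneg_right hxx (by have := hk1 k; positivity)
  have har : ∀ k, a k ≤ r := by
    intro k
    rw [ha, hr]
    calc ((n:ℝ) * x / π) ^ 2 / ((k:ℝ) + 1) ^ 2 ≤ ((n:ℝ) * x / π) ^ 2 / 1 :=
      div_le_div_of_nonneg_left (by positivity) one_pos (hk1 k)
    _ = ((n:ℝ) * x / π) ^ 2 := div_one _
  -- the individual log terms
  set f : ℕ → ℝ := fun k => Real.log (1 + a k) - Real.log (1 + b k) with hf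
  have hfnonneg : ∀ k, 0 ≤ f k := by
    intro k
    have := hba k
    have := hbpos k
    apply sub_nonneg.mpr
    apply Real.log_le_log (by linarith) (by linarith)
  have hfle : ∀ k, f k ≤ a k := by
    intro k
    have h1 : Real.log (1 + a k) ≤ a k := by
      have := Real.log_le_sub_one_of_pos (show (0:ℝ) < 1 + a k by linarith [hapos k])
      linarith
    have h2 : 0 ≤ Real.log (1 + b k) :=
      Real.log_nonneg (by linarith [hbpos k])
    simp only [hf]
    linarith
  -- summability of `f`
  have hsum2 : Summable (fun k : ℕ => 1 / ((k:ℝ) + 1) ^ 2) := by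
    have h1 : Summable (fun k : ℕ => 1 / (k:ℝ) ^ 2) :=
      Real.summable_one_div_nat_pow.mpr one_lt_two
    have h2 := (summable_nat_add_iff 1).mpr h1
    refine h2.congr fun k => ?_
    push_cast
    ring_nf
  have hsuma : Summable a := by
    have := hsum2.mul_left (((n:ℝ) * x / π) ^ 2)
    refine this.congr fun k => ?_
    simp [ha, div_eq_mul_inv, one_div]
  have hsumf : Summable f :=
    Summable.of_nonneg_of_le hfnonneg hfle hsuma
  -- partial sums of `f` converge to the log of the ratio
  have hQn := sinh_euler_prod ((n:ℝ) * x) hnx0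
  have hQ1 := sinh_euler_prod x hx0
  have hsinh_n : Real.sinh ((n:ℝ) * x) / ((n:ℝ) * x) ≠ 0 :=
    div_ne_zero (Real.sinh_ne_zero.mpr hnx0) hnx0
  have hsinh_1 : Real.sinh x / x ≠ 0 :=
    div_ne_zero (Real.sinh_ne_zero.mpr hx0) hx0
  have hlog_n := ((Real.continuousAt_log hsinh_n).tendsto.comp hQn)
  have hlog_1 := ((Real.continuousAt_log hsinh_1).tendsto.comp hQ1)
  have hpartial : ∀ K : ℕ, ∑ j ∈ Finset.range K, f j =
      Real.log (∏ j ∈ Finset.range K, (1 + ((n:ℝ) * x / π) ^ 2 / ((j:ℝ) + 1) ^ 2)) -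
      Real.log (∏ j ∈ Finset.range K, (1 + (x / π) ^ 2 / ((j:ℝ) + 1) ^ 2)) := by
    intro K
    rw [Real.log_prod fun j _ => by have := hapos j; positivity,
        Real.log_prod fun j _ => by have := hbpos j; positivity,
        ← Finset.sum_sub_distrib]
  set L : ℝ := Real.log (Real.sinh ((n:ℝ) * x) / ((n:ℝ) * x)) - Real.log (Real.sinh x / x) with hL
  have htends : Tendsto (fun K => ∑ j ∈ Finset.range K, f j) atTop (𝓝 L) := by
    rw [funext hpartial]
    exact hlog_n.sub hlog_1
  have htsum : ∑' k, f k = L :=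
    tendsto_nhds_unique (hsumf.hasSum.tendsto_sum_nat) htends
  -- the left-hand side equals `L`
  have hLHS : Real.log (Real.sinh ((n : ℝ) * x) / ((n : ℝ) * Real.sinh x)) = L := by
    have hsx : Real.sinh x ≠ 0 := Real.sinh_ne_zero.mpr hx0
    have : Real.sinh ((n : ℝ) * x) / ((n : ℝ) * Real.sinh x) =
        (Real.sinh ((n:ℝ) * x) / ((n:ℝ) * x)) / (Real.sinh x / x) := by
      field_simp
    rw [this, hL, Real.log_div hsinh_n hsinh_1]
  rw [hLHS, ← htsum]
  -- expand each `f k` as a power series in `a k`, `b k`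
  set g : ℕ → ℕ → ℝ := fun m k => (-1:ℝ) ^ m * ((a k) ^ (m+1) - (b k) ^ (m+1)) / (m+1)
    with hgdef
  have hg : ∀ k, HasSum (fun m => g m k) (f k) := by
    intro k
    have hak1 : |(-(a k))| < 1 := by
      rw [abs_neg, abs_of_pos (hapos k)]
      exact lt_of_le_of_lt (har k) hr1
    have hbk1 : |(-(b k))| < 1 := by
      rw [abs_neg, abs_of_pos (hbpos k)]
      exact lt_of_le_of_lt (le_trans (hba k) (har k)) hr1
    have h₁ := Real.hasSum_pow_div_log_of_abs_lt_one hak1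
    have h₂ := Real.hasSum_pow_div_log_of_abs_lt_one hbk1
    rw [sub_neg_eq_add] at h₁ h₂
    have h₃ := h₂.sub h₁
    have heq : (fun m : ℕ => (-(b k)) ^ (m+1) / (m+1) - (-(a k)) ^ (m+1) / (m+1))
        = fun m => g m k := by
      funext m
      have e1 : (-(b k)) ^ (m+1) = (-1:ℝ)^(m+1) * (b k)^(m+1) := by
        rw [neg_pow]
      have e2 : (-(a k)) ^ (m+1) = (-1:ℝ)^(m+1) * (a k)^(m+1) := by
        rw [neg_pow]
      rw [e1, e2]
      simp only [hgdef]
      ring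
    rw [heq] at h₃
    have : -Real.log (1 + b k) - -Real.log (1 + a k) = f k := by
      simp only [hf]; ring
    rwa [this] at h₃
  -- absolute summability of the double series
  have hFsum : Summable (Function.uncurry g) := by
    rw [← summable_abs_iff]
    have hbound : ∀ p : ℕ × ℕ, |Function.uncurry g p| ≤ 2 * r ^ p.1 * a p.2 := by
      rintro ⟨m, k⟩
      have hak := hapos k
      have hbk := hbpos k
      have h1 : |g m k| ≤ ((a k) ^ (m+1) + (b k) ^ (m+1)) / (m+1) := by
        simp only [hgdef]
        rw [abs_div, abs_mul, abs_pow, abs_neg, abs_one, one_pow, one_mul,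
          abs_of_pos (show (0:ℝ) < (m:ℝ)+1 by positivity)]
        apply div_le_div_of_nonneg_right ?_ (by positivity)
        calc |a k ^ (m+1) - b k ^ (m+1)| ≤ |a k ^ (m+1)| + |b k ^ (m+1)| := abs_sub _ _
        _ = a k ^ (m+1) + b k ^ (m+1) := by
          rw [abs_of_pos (by positivity), abs_of_pos (by positivity)]
      have h2 : (a k) ^ (m+1) + (b k) ^ (m+1) ≤ 2 * (a k) ^ (m+1) := by
        have := pow_le_pow_left₀ (le_of_lt hbk) (hba k) (m+1)
        linarith
      have h3 : (a k) ^ (m+1) ≤ r ^ m * a k := by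
        rw [pow_succ]
        apply mul_le_mul (pow_le_pow_left₀ (le_of_lt hak) (har k) m) le_rfl
          (le_of_lt hak) (by positivity)
      have h4 : ((a k) ^ (m+1) + (b k) ^ (m+1)) / (m+1) ≤ (a k) ^ (m+1) + (b k) ^ (m+1) := by
        apply div_le_self (by positivity)
        have : (0:ℝ) ≤ m := Nat.cast_nonneg m
        linarith
      calc |Function.uncurry g (m, k)| = |g m k| := rfl
      _ ≤ ((a k) ^ (m+1) + (b k) ^ (m+1)) / (m+1) := h1
      _ ≤ (a k) ^ (m+1) + (b k) ^ (m+1) := h4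
      _ ≤ 2 * (a k) ^ (m+1) := h2
      _ ≤ 2 * (r ^ m * a k) := by nlinarith
      _ = 2 * r ^ m * a k := by ring
    have hG : Summable (fun p : ℕ × ℕ => 2 * r ^ p.1 * a p.2) := by
      have hgeo : Summable (fun m : ℕ => 2 * r ^ m) :=
        (summable_geometric_of_lt_one (le_of_lt hr0) hr1).mul_left 2
      have := hgeo.mul_of_nonneg hsuma (fun m => by positivity)
        (fun k => le_of_lt (hapos k))
      exact this.congr fun p => by ring
    exact Summable.of_nonneg_of_le (fun p => abs_nonneg _) hbound hG
  -- interchange the two sums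
  have hswap : ∑' k, f k = ∑' m, ∑' k, g m k := by
    rw [tsum_congr fun k => (hg k).tsum_eq.symm]
    exact Summable.tsum_comm hFsum
  rw [hswap]
  refine tsum_congr fun m => ?_
  -- the zeta value at `2(m+1)`
  have hz := hasSum_zeta_nat (k := m + 1) (by omega)
  set S : ℝ := (-1 : ℝ) ^ (m + 1 + 1) * (2 : ℝ) ^ (2 * (m + 1) - 1) * π ^ (2 * (m + 1)) *
      (bernoulli (2 * (m + 1)) : ℝ) / ((2 * (m + 1)).factorial : ℝ) with hS
  have hz1 : HasSum (fun k : ℕ => 1 / ((k:ℝ) + 1) ^ (2 * (m + 1))) S := by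
    have h1 := (hasSum_nat_add_iff' (f := fun j : ℕ => 1 / (j:ℝ) ^ (2 * (m + 1))) 1).mpr hz
    have h2 : ∑ i ∈ Finset.range 1, (1 : ℝ) / (i:ℝ) ^ (2 * (m + 1)) = 0 := by
      simp [zero_pow (show 2 * (m + 1) ≠ 0 by omega)]
    rw [h2, sub_zero] at h1
    refine h1.congr_fun fun k => ?_
    push_cast
    norm_num
  -- each inner sum
  have hC : HasSum (fun k => g m k)
      (((-1:ℝ) ^ m * (((n:ℝ) * x / π) ^ (2 * (m + 1)) - (x / π) ^ (2 * (m + 1))) /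
        ((m:ℝ) + 1)) * S) := by
    have := hz1.mul_left
      ((-1:ℝ) ^ m * (((n:ℝ) * x / π) ^ (2 * (m + 1)) - (x / π) ^ (2 * (m + 1))) / ((m:ℝ) + 1))
    refine this.congr_fun fun k => ?_
    have e1 : a k ^ (m+1) = ((n:ℝ) * x / π) ^ (2*(m+1)) / ((k:ℝ)+1) ^ (2*(m+1)) := by
      show (((n:ℝ) * x / π) ^ 2 / ((k:ℝ) + 1) ^ 2) ^ (m+1) = _
      rw [div_pow, ← pow_mul, ← pow_mul]
    have e2 : b k ^ (m+1) = (x / π) ^ (2*(m+1)) / ((k:ℝ)+1) ^ (2*(m+1)) := by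
      show ((x / π) ^ 2 / ((k:ℝ) + 1) ^ 2) ^ (m+1) = _
      rw [div_pow, ← pow_mul, ← pow_mul]
    show (-1:ℝ) ^ m * (a k ^ (m+1) - b k ^ (m+1)) / ((m:ℝ)+1) = _
    rw [e1, e2, div_sub_div_same]
    ring
  rw [hC.tsum_eq]
  -- final algebraic identification
  have hBm : ((Bm (m + 1) : ℚ) : ℝ) = (-1:ℝ) ^ m * (bernoulli (2 * (m + 1)) : ℝ) := by
    rw [Bm, Nat.add_sub_cancel]
    push_cast
    ring
  rw [hBm, hS]
  have hπE : (π:ℝ) ^ (2 * (m + 1)) ≠ 0 := pow_ne_zero _ (ne_of_gt hπ)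
  have hfac : (((2 * (m + 1)).factorial : ℕ) : ℝ) ≠ 0 := by
    exact_mod_cast Nat.factorial_ne_zero _
  have hm1 : ((m:ℝ) + 1) ≠ 0 := by positivity
  have hsign : (-1:ℝ) ^ (m + 1 + 1) = (-1:ℝ) ^ m := by
    rw [pow_succ, pow_succ]; ring
  rw [hsign, div_pow, div_pow, mul_pow]
  exact final_alg _ _ _ _ _ _ _ _ hπE hfac hm1
end

section
/- With the setup of the principal gradation of ĝl_N, define x^{(μ)}_{Nm+ν} = Σ_{i=1}^{N-ν} ω^{μ(i+ν-1)} E^{i,i+ν}_m + Σ_{i=N-ν+1}^{N} ω^{μ(i+ν-1)} E^{i,i+ν-N}_{m+1} for 1 ≤ ν ≤ N-1, and x^{(μ)}_{Nm} = Σ_{i=1}^{N-1} ((1-ω^{μi})/(1-ω^{μ})) H^i_m - (k/(1-ω^{μ})) δ_{m,0} where H^i_m = E^{i,i}_m - E^{i+1,i+1}_m. Then [β_n, x^{(ν)}_{m}] = (1 - ω^{-ν n}) x^{(ν)}_{n+m} for all n ∈ ℤ with n ≢ 0 mod N, m ∈ ℤ, and 1 ≤ ν ≤ N-1. -/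
/-- The principal Heisenberg element `β_{Nm+ν} = ∑_{i=1}^{N-ν} E^{i,i+ν}_m
+ ∑_{i=N-ν+1}^{N} E^{i,i+ν-N}_{m+1}`, where `n = Nm + ν` with `0 ≤ ν < N`
(Euclidean division). -/
noncomputable def betaEl {L : Type*} [AddCommGroup L]
    (N : ℕ) (E : ℕ → ℕ → ℤ → L) (n : ℤ) : L :=
  ∑ i ∈ Finset.Icc 1 (N - (n % (N : ℤ)).toNat),
      E i (i + (n % (N : ℤ)).toNat) (n / (N : ℤ)) +
    ∑ i ∈ Finset.Icc (N - (n % (N : ℤ)).toNat + 1) N,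
      E i (i + (n % (N : ℤ)).toNat - N) (n / (N : ℤ) + 1)

/-- The principal current modes: for `n = Nm + ν` with `1 ≤ ν ≤ N-1`,
`x^{(μ)}_{Nm+ν} = ∑_{i=1}^{N-ν} ω^{μ(i+ν-1)} E^{i,i+ν}_m
+ ∑_{i=N-ν+1}^{N} ω^{μ(i+ν-1)} E^{i,i+ν-N}_{m+1}`, and
`x^{(μ)}_{Nm} = ∑_{i=1}^{N-1} ((1-ω^{μi})/(1-ω^μ)) H^i_m - (k/(1-ω^μ)) δ_{m,0}`
with `H^i_m = E^{i,i}_m - E^{i+1,i+1}_m`. -/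
noncomputable def xEl {L : Type*} [AddCommGroup L] [Module ℂ L]
    (N : ℕ) (ω : ℂ) (E : ℕ → ℕ → ℤ → L) (K : L) (μ n : ℤ) : L :=
  if n % (N : ℤ) = 0 then
    (∑ i ∈ Finset.Icc 1 (N - 1),
        ((1 - ω ^ (μ * i)) / (1 - ω ^ μ)) • (E i i (n / (N : ℤ)) - E (i + 1) (i + 1) (n / (N : ℤ))))
      - (if n = 0 then (1 / (1 - ω ^ μ)) • K else 0)
  else
    ∑ i ∈ Finset.Icc 1 (N - (n % (N : ℤ)).toNat),
        ω ^ (μ * ((i : ℤ) + ((n % (N : ℤ)).toNat : ℤ) - 1)) •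
          E i (i + (n % (N : ℤ)).toNat) (n / (N : ℤ)) +
      ∑ i ∈ Finset.Icc (N - (n % (N : ℤ)).toNat + 1) N,
        ω ^ (μ * ((i : ℤ) + ((n % (N : ℤ)).toNat : ℤ) - 1)) •
          E i (i + (n % (N : ℤ)).toNat - N) (n / (N : ℤ) + 1)

namespace BetaXAux

def res (N : ℕ) (i : ℤ) : ℤ := (i - 1) % (N : ℤ) + 1

def lvl (N : ℕ) (i d : ℤ) : ℤ := (d + res N i - res N (i + d)) / (N : ℤ)

noncomputable def Xg {L : Type*} [AddCommGroup L] (N : ℕ) (E : ℕ → ℕ → ℤ → L) (i d : ℤ) : L :=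
  E (res N i).toNat (res N (i + d)).toNat (lvl N i d)

variable {N : ℕ}

lemma res_bounds (hN : 0 < N) (i : ℤ) : 1 ≤ res N i ∧ res N i ≤ N := by
  have h0 : ((N : ℤ)) ≠ 0 := by exact_mod_cast hN.ne'
  have h1 := Int.emod_nonneg (i - 1) h0
  have h2 := Int.emod_lt_of_pos (i - 1) (show (0:ℤ) < (N:ℤ) by exact_mod_cast hN)
  unfold res; constructor <;> linarith

lemma res_dvd (i : ℤ) : (N : ℤ) ∣ i - res N i := by
  refine ⟨(i - 1) / N, ?_⟩
  have := Int.mul_ediv_add_emod (i - 1) (N : ℤ)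
  unfold res; linarith

lemma res_congr {a b : ℤ} (h : (N : ℤ) ∣ a - b) : res N a = res N b := by
  unfold res
  congr 1
  rw [Int.emod_eq_emod_iff_emod_sub_eq_zero]
  have e : a - 1 - (b - 1) = a - b := by ring
  rw [e]
  exact Int.emod_eq_zero_of_dvd h

lemma res_eq_self {i : ℤ} (h1 : 1 ≤ i) (h2 : i ≤ N) : res N i = i := by
  unfold res
  rw [Int.emod_eq_of_lt (by linarith) (by linarith)]
  ring

lemma res_uniq (_hN : 0 < N) {a j : ℤ} (h1 : 1 ≤ j) (h2 : j ≤ N) (h : (N : ℤ) ∣ j - a) :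
    res N a = j := by
  rw [res_congr (dvd_sub_comm.mp h), res_eq_self h1 h2]

lemma lvl_spec (i d : ℤ) : (N : ℤ) * lvl N i d = d + res N i - res N (i + d) := by
  refine Int.mul_ediv_cancel' ?_
  have h1 := res_dvd (N := N) (i + d)
  have h2 := res_dvd (N := N) i
  have e : d + res N i - res N (i + d) = (i + d - res N (i + d)) - (i - res N i) := by ring
  rw [e]
  exact dvd_sub h1 h2

lemma lvl_add (hN : 0 < N) {i j d e : ℤ} (h : (N : ℤ) ∣ j - (i + d)) :
    lvl N i d + lvl N j e = lvl N i (d + e) := by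
  have hNe : (N : ℤ) ≠ 0 := by exact_mod_cast hN.ne'
  apply mul_left_cancel₀ hNe
  rw [mul_add, lvl_spec, lvl_spec, lvl_spec]
  have e1 : res N j = res N (i + d) := res_congr h
  have e2 : res N (j + e) = res N (i + (d + e)) := by
    refine res_congr ?_
    obtain ⟨c, hc⟩ := h
    exact ⟨c, by linarith⟩
  rw [e1, e2]; ring

lemma toNat_res_eq_iff (hN : 0 < N) (a b : ℤ) :
    (res N a).toNat = (res N b).toNat ↔ (N : ℤ) ∣ a - b := by
  have b1 := res_bounds hN a
  have b2 := res_bounds hN b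
  constructor
  · intro h
    have hr : res N a = res N b := by omega
    have e : a - b = (a - res N a) - (b - res N b) := by rw [hr]; ring
    rw [e]
    exact dvd_sub (res_dvd a) (res_dvd b)
  · intro h
    rw [res_congr h]

lemma lvl_zero_iff (hN : 0 < N) {i d : ℤ} (h : (N : ℤ) ∣ d) : lvl N i d = 0 ↔ d = 0 := by
  have hs := lvl_spec (N := N) i d
  rw [res_congr (show (N:ℤ) ∣ (i + d) - i by simpa using h)] at hs
  obtain ⟨c, rfl⟩ := h
  have hNe : (0:ℤ) < (N : ℤ) := by exact_mod_cast hN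
  constructor
  · intro h0; rw [h0, mul_zero] at hs
    omega
  · intro h0
    have : (N:ℤ) * lvl N i (N * c) = 0 := by omega
    exact (mul_eq_zero.mp this).resolve_left hNe.ne' 


lemma Icc_split {M : Type*} [AddCommMonoid M] (f : ℕ → M) {a b : ℕ} (h : a ≤ b) :
    ∑ i ∈ Finset.Icc 1 b, f i = (∑ i ∈ Finset.Icc 1 a, f i) + ∑ i ∈ Finset.Icc (a + 1) b, f i := by
  have h2 := Finset.sum_Ioc_consecutive f (Nat.zero_le a) h
  simp only [← Finset.Icc_add_one_left_eq_Ioc, Nat.succ_eq_add_one, Nat.zero_add] at h2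
  exact h2.symm

section PerTerm

variable {L : Type*} [AddCommGroup L] (E : ℕ → ℕ → ℤ → L)

lemma Xg_low (hN : 0 < N) {m : ℤ} {s i : ℕ} (hs : (s : ℤ) = m % (N : ℤ))
    (h1 : 1 ≤ i) (h2 : i + s ≤ N) :
    Xg N E (i : ℤ) m = E i (i + s) (m / (N : ℤ)) := by
  have hNe : ((N : ℤ)) ≠ 0 := by exact_mod_cast hN.ne'
  have hdm : (N : ℤ) * (m / (N : ℤ)) = m - s := by
    have := Int.mul_ediv_add_emod m (N : ℤ); linarith
  have hr1 : res N (i : ℤ) = (i : ℤ) := res_eq_self (by exact_mod_cast h1) (by exact_mod_cast le_trans (Nat.le_add_right i s) h2)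
  have hr2 : res N ((i : ℤ) + m) = ((i + s : ℕ) : ℤ) := by
    refine res_uniq hN (by push_cast; omega) (by exact_mod_cast h2) ?_
    refine ⟨-(m / (N : ℤ)), ?_⟩
    push_cast
    linarith
  unfold Xg lvl
  rw [hr1, hr2]
  have e3 : ((i : ℤ) + (s : ℤ) - ((i:ℤ) + (s:ℤ))) = 0 := by ring
  have : (m + (i : ℤ) - ((i + s : ℕ) : ℤ)) = (N : ℤ) * (m / (N : ℤ)) := by push_cast; linarith
  rw [this, Int.mul_ediv_cancel_left _ hNe, Int.toNat_natCast, Int.toNat_natCast]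

lemma Xg_high (hN : 0 < N) {m : ℤ} {s i : ℕ} (hs : (s : ℤ) = m % (N : ℤ))
    (hsN : s ≤ N) (h1 : N + 1 ≤ i + s) (h2 : i ≤ N) :
    Xg N E (i : ℤ) m = E i (i + s - N) (m / (N : ℤ) + 1) := by
  have hNe : ((N : ℤ)) ≠ 0 := by exact_mod_cast hN.ne'
  have hdm : (N : ℤ) * (m / (N : ℤ)) = m - s := by
    have := Int.mul_ediv_add_emod m (N : ℤ); linarith
  have hi1 : 1 ≤ i := by omega
  have hr1 : res N (i : ℤ) = (i : ℤ) := res_eq_self (by exact_mod_cast hi1) (by exact_mod_cast h2)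
  have hr2 : res N ((i : ℤ) + m) = ((i + s - N : ℕ) : ℤ) := by
    refine res_uniq hN (by push_cast [Nat.cast_sub (by omega : N ≤ i + s)]; omega)
      (by push_cast [Nat.cast_sub (by omega : N ≤ i + s)]; omega) ?_
    refine ⟨-(m / (N : ℤ)) - 1, ?_⟩
    push_cast [Nat.cast_sub (by omega : N ≤ i + s)]
    linarith
  unfold Xg lvl
  rw [hr1, hr2]
  have : (m + (i : ℤ) - ((i + s - N : ℕ) : ℤ)) = (N : ℤ) * (m / (N : ℤ) + 1) := by
    push_cast [Nat.cast_sub (by omega : N ≤ i + s)]; linarith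
  rw [this, Int.mul_ediv_cancel_left _ hNe, Int.toNat_natCast, Int.toNat_natCast]

lemma Xg_diag (hN : 0 < N) {m : ℤ} (hm : m % (N : ℤ) = 0) {i : ℕ} (h1 : 1 ≤ i) (h2 : i ≤ N) :
    Xg N E (i : ℤ) m = E i i (m / (N : ℤ)) := by
  have hNe : ((N : ℤ)) ≠ 0 := by exact_mod_cast hN.ne'
  have hdvd : (N : ℤ) ∣ m := Int.dvd_of_emod_eq_zero hm
  have hdm : (N : ℤ) * (m / (N : ℤ)) = m := Int.mul_ediv_cancel' hdvd
  have hr1 : res N (i : ℤ) = (i : ℤ) := res_eq_self (by exact_mod_cast h1) (by exact_mod_cast h2)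
  have hr2 : res N ((i : ℤ) + m) = (i : ℤ) := by
    refine res_uniq hN (by exact_mod_cast h1) (by exact_mod_cast h2) ?_
    refine ⟨-(m / (N : ℤ)), ?_⟩; linarith
  unfold Xg lvl
  rw [hr1, hr2]
  have : ((m + (i : ℤ) - (i : ℤ))) = (N : ℤ) * (m / (N : ℤ)) := by linarith
  rw [this, Int.mul_ediv_cancel_left _ hNe, Int.toNat_natCast]

end PerTerm


section Brak

variable {L : Type*} [LieRing L] [LieAlgebra ℂ L]

lemma Xg_brak (N : ℕ) (hN : 0 < N) (E : ℕ → ℕ → ℤ → L) (K : L)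
    (hbrak : ∀ i j i' j' : ℕ, 1 ≤ i → i ≤ N → 1 ≤ j → j ≤ N →
      1 ≤ i' → i' ≤ N → 1 ≤ j' → j' ≤ N → ∀ n m : ℤ,
      ⁅E i j n, E i' j' m⁆ =
        (if j = i' then E i j' (n + m) else 0) - (if i = j' then E i' j (n + m) else 0) +
          (if i = j' ∧ j = i' ∧ n + m = 0 then (n : ℂ) • K else 0))
    (i j d e : ℤ) :
    ⁅Xg N E i d, Xg N E j e⁆ =
      (if (N : ℤ) ∣ j - (i + d) then Xg N E i (d + e) else 0)
      - (if (N : ℤ) ∣ i - (j + e) then Xg N E j (d + e) else 0)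
      + (if ((N : ℤ) ∣ i - (j + e)) ∧ ((N : ℤ) ∣ j - (i + d)) ∧ d + e = 0
          then ((lvl N i d : ℤ) : ℂ) • K else 0) := by
  have bi := res_bounds hN i
  have bid := res_bounds hN (i + d)
  have bj := res_bounds hN j
  have bje := res_bounds hN (j + e)
  conv_lhs => rw [Xg, Xg]
  rw [hbrak (res N i).toNat (res N (i + d)).toNat (res N j).toNat (res N (j + e)).toNat
    (by omega) (by omega) (by omega) (by omega) (by omega) (by omega) (by omega) (by omega)
    (lvl N i d) (lvl N j e)]
  have c1 : ((res N (i + d)).toNat = (res N j).toNat) ↔ (N : ℤ) ∣ j - (i + d) :=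
    (toNat_res_eq_iff hN _ _).trans dvd_sub_comm
  have c2 : ((res N i).toNat = (res N (j + e)).toNat) ↔ (N : ℤ) ∣ i - (j + e) :=
    toNat_res_eq_iff hN _ _
  congr 1
  · congr 1
    · -- first if
      by_cases h1 : (N : ℤ) ∣ j - (i + d)
      · rw [if_pos (c1.mpr h1), if_pos h1]
        unfold Xg
        rw [show res N (j + e) = res N (i + (d + e)) from
            res_congr (by obtain ⟨c, hc⟩ := h1; exact ⟨c, by linarith⟩),
          lvl_add hN h1]
      · rw [if_neg (fun hc => h1 (c1.mp hc)), if_neg h1]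
    · -- second if
      by_cases h2 : (N : ℤ) ∣ i - (j + e)
      · rw [if_pos (c2.mpr h2), if_pos h2]
        unfold Xg
        rw [show res N (i + d) = res N (j + (d + e)) from
            res_congr (by obtain ⟨c, hc⟩ := h2; exact ⟨c, by linarith⟩)]
        rw [show lvl N i d + lvl N j e = lvl N j (d + e) from by
          rw [add_comm, lvl_add hN h2, add_comm e d]]
      · rw [if_neg (fun hc => h2 (c2.mp hc)), if_neg h2]
  · -- central term
    by_cases h2 : (N : ℤ) ∣ i - (j + e)
    · by_cases h1 : (N : ℤ) ∣ j - (i + d)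
      · have hde : (N : ℤ) ∣ d + e := by
          have := dvd_add h1 h2
          have e1 : j - (i + d) + (i - (j + e)) = -(d + e) := by ring
          rw [e1] at this
          exact (dvd_neg.mp this)
        have c3 : lvl N i d + lvl N j e = 0 ↔ d + e = 0 := by
          rw [lvl_add hN h1]
          exact lvl_zero_iff hN hde
        by_cases h3 : d + e = 0
        · rw [if_pos ⟨c2.mpr h2, c1.mpr h1, c3.mpr h3⟩, if_pos ⟨h2, h1, h3⟩]
        · rw [if_neg (fun hc => h3 (c3.mp hc.2.2)), if_neg (fun hc => h3 hc.2.2)]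
      · rw [if_neg (fun hc => h1 (c1.mp hc.2.1)), if_neg (fun hc => h1 hc.2.1)]
    · rw [if_neg (fun hc => h2 (c2.mp hc.1)), if_neg (fun hc => h2 hc.1)]

end Brak

/-- collapse of a congruence-indicator sum -/
lemma collapse {M : Type*} [AddCommMonoid M] (hN : 0 < N) (a : ℤ) (g : ℕ → M) :
    ∑ j ∈ Finset.Icc 1 N, (if (N : ℤ) ∣ (j : ℤ) - a then g j else 0) = g (res N a).toNat := by
  have hb := res_bounds hN a
  have hmem : (res N a).toNat ∈ Finset.Icc 1 N := by
    rw [Finset.mem_Icc]; omega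
  rw [Finset.sum_eq_single_of_mem _ hmem]
  · rw [if_pos]
    rw [Int.toNat_of_nonneg (by omega)]
    exact dvd_sub_comm.mp (res_dvd a)
  · intro b hb' hne
    rw [Finset.mem_Icc] at hb'
    rw [if_neg]
    intro hdvd
    have : res N a = (b : ℤ) := res_uniq hN (by exact_mod_cast hb'.1) (by exact_mod_cast hb'.2) hdvd
    omega


section Rep

variable {L : Type*} [AddCommGroup L]

lemma beta_rep (hN : 0 < N) (E : ℕ → ℕ → ℤ → L) (n : ℤ) :
    betaEl N E n = ∑ i ∈ Finset.Icc 1 N, Xg N E (i : ℤ) n := by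
  have h0 : (0 : ℤ) < (N : ℤ) := by exact_mod_cast hN
  have hmod1 := Int.emod_nonneg n h0.ne'
  have hmod2 := Int.emod_lt_of_pos n h0
  set s := (n % (N : ℤ)).toNat with hsdef
  have hs : (s : ℤ) = n % (N : ℤ) := Int.toNat_of_nonneg hmod1
  have hsN : s ≤ N := by omega
  rw [betaEl, Icc_split _ (show N - s ≤ N by omega), show N - s + 1 = N - s + 1 from rfl]
  congr 1
  · refine Finset.sum_congr rfl fun i hi => ?_
    rw [Finset.mem_Icc] at hi
    exact (Xg_low E hN hs hi.1 (by omega)).symm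
  · refine Finset.sum_congr rfl fun i hi => ?_
    rw [Finset.mem_Icc] at hi
    exact (Xg_high E hN hs hsN (by omega) hi.2).symm

end Rep

section XRep

variable {L : Type*} [AddCommGroup L] [Module ℂ L]

lemma telescope (hN : 1 ≤ N) (c : ℕ → ℂ) (hc0 : c 0 = 0) (hcN : c N = 0) (A : ℕ → L) :
    ∑ i ∈ Finset.Icc 1 (N - 1), c i • (A i - A (i + 1))
      = ∑ i ∈ Finset.Icc 1 N, (c i - c (i - 1)) • A i := by
  have e1 : ∑ i ∈ Finset.Icc 1 N, (c i - c (i - 1)) • A i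
      = (∑ i ∈ Finset.Icc 1 N, c i • A i) - ∑ i ∈ Finset.Icc 1 N, c (i - 1) • A i := by
    rw [← Finset.sum_sub_distrib]
    exact Finset.sum_congr rfl fun i _ => (sub_smul _ _ _)
  have e2 : ∑ i ∈ Finset.Icc 1 N, c i • A i
      = ∑ i ∈ Finset.Icc 1 (N - 1), c i • A i := by
    have h2 := Finset.sum_Icc_succ_top (show 1 ≤ (N - 1) + 1 by omega) (fun i => c i • A i)
    rw [show N - 1 + 1 = N by omega] at h2
    rw [h2, hcN, zero_smul, add_zero]
  have e3 : ∑ i ∈ Finset.Icc 1 N, c (i - 1) • A i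
      = ∑ i ∈ Finset.Icc 1 (N - 1), c i • A (i + 1) := by
    rw [Icc_split (fun i => c (i - 1) • A i) hN]
    simp only [Finset.Icc_self, Finset.sum_singleton, Nat.sub_self, hc0, zero_smul, zero_add]
    have hm : (Finset.Icc 1 (N - 1)).map (addRightEmbedding 1) = Finset.Icc (1 + 1) N := by
      rw [Finset.map_add_right_Icc]; congr 1; omega
    rw [← hm, Finset.sum_map]
    refine Finset.sum_congr rfl fun i _ => ?_
    simp [addRightEmbedding]
  rw [e1, e2, e3, ← Finset.sum_sub_distrib]
  exact Finset.sum_congr rfl fun i _ => smul_sub _ _ _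

lemma x_rep (hN : 2 ≤ N) (ω : ℂ) (hω0 : ω ≠ 0)
    (hper : ∀ a b : ℤ, (N : ℤ) ∣ a - b → ω ^ a = ω ^ b)
    (E : ℕ → ℕ → ℤ → L) (K : L) (ν : ℤ) (hν : ω ^ ν ≠ 1) (m : ℤ) :
    xEl N ω E K ν m = (∑ i ∈ Finset.Icc 1 N, ω ^ (ν * ((i : ℤ) + m - 1)) • Xg N E (i : ℤ) m)
      - (if m = 0 then (1 / (1 - ω ^ ν)) • K else 0) := by
  have hN0 : 0 < N := by omega
  have h0 : (0 : ℤ) < (N : ℤ) := by exact_mod_cast hN0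
  have hz : (1 : ℂ) - ω ^ ν ≠ 0 := sub_ne_zero.mpr (fun h => hν h.symm)
  by_cases hm : m % (N : ℤ) = 0
  · rw [xEl, if_pos hm]
    congr 1
    have hsum : ∀ i ∈ Finset.Icc 1 N, ω ^ (ν * ((i : ℤ) + m - 1)) • Xg N E (i : ℤ) m
        = ω ^ (ν * ((i : ℤ) - 1)) • E i i (m / (N : ℤ)) := by
      intro i hi
      rw [Finset.mem_Icc] at hi
      rw [Xg_diag E hN0 hm hi.1 hi.2,
        hper (ν * ((i : ℤ) + m - 1)) (ν * ((i : ℤ) - 1))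
          ⟨ν * (m / (N : ℤ)), by linear_combination (-ν) * Int.mul_ediv_add_emod m (N : ℤ) + ν * hm⟩]
    rw [Finset.sum_congr rfl hsum]
    have ht := telescope (show 1 ≤ N by omega)
      (fun i => (1 - ω ^ (ν * (i : ℤ))) / (1 - ω ^ ν))
      (by norm_num) (by
        have h1 : ω ^ (ν * ((N : ℕ) : ℤ)) = 1 := by
          rw [hper (ν * ((N : ℕ) : ℤ)) 0 ⟨ν, by ring⟩, zpow_zero]
        simp only [h1, sub_self, zero_div])
      (fun i => E i i (m / (N : ℤ)))
    rw [ht]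
    refine Finset.sum_congr rfl fun i hi => ?_
    rw [Finset.mem_Icc] at hi
    congr 1
    have hcast : (((i - 1 : ℕ)) : ℤ) = (i : ℤ) - 1 := by
      push_cast [Nat.cast_sub hi.1]; ring
    rw [hcast]
    have key : ω ^ (ν * (i : ℤ)) = ω ^ (ν * ((i : ℤ) - 1)) * ω ^ ν := by
      rw [← zpow_add₀ hω0, show ν * ((i : ℤ) - 1) + ν = ν * (i : ℤ) by ring]
    rw [key]
    field_simp
    ring
  · rw [xEl, if_neg hm]
    have hm0 : m ≠ 0 := fun h => hm (by rw [h]; simp)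
    rw [if_neg hm0, sub_zero]
    have hmod1 := Int.emod_nonneg m h0.ne'
    have hmod2 := Int.emod_lt_of_pos m h0
    set s := (m % (N : ℤ)).toNat with hsdef
    have hs : (s : ℤ) = m % (N : ℤ) := Int.toNat_of_nonneg hmod1
    have hsN : s ≤ N := by omega
    rw [Icc_split (fun i => ω ^ (ν * ((i : ℤ) + m - 1)) • Xg N E (i : ℤ) m)
      (show N - s ≤ N by omega)]
    congr 1
    · refine Finset.sum_congr rfl fun i hi => ?_
      rw [Finset.mem_Icc] at hi
      rw [Xg_low E hN0 hs hi.1 (by omega)]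
      congr 1
      refine hper _ _ ⟨-(ν * (m / (N : ℤ))), ?_⟩
      linear_combination ν * Int.mul_ediv_add_emod m (N : ℤ) + ν * hs
    · refine Finset.sum_congr rfl fun i hi => ?_
      rw [Finset.mem_Icc] at hi
      rw [Xg_high E hN0 hs hsN (by omega) hi.2]
      congr 1
      refine hper _ _ ⟨-(ν * (m / (N : ℤ))), ?_⟩
      linear_combination ν * Int.mul_ediv_add_emod m (N : ℤ) + ν * hs

end XRep

section Central

lemma lvl_low (hN : 0 < N) {m : ℤ} {s i : ℕ} (hs : (s : ℤ) = m % (N : ℤ))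
    (h1 : 1 ≤ i) (h2 : i + s ≤ N) : lvl N (i : ℤ) m = m / (N : ℤ) := by
  have hNe : ((N : ℤ)) ≠ 0 := by exact_mod_cast hN.ne'
  have hdm : (N : ℤ) * (m / (N : ℤ)) = m - s := by
    have := Int.mul_ediv_add_emod m (N : ℤ); linarith
  have hr1 : res N (i : ℤ) = (i : ℤ) := res_eq_self (by exact_mod_cast h1)
    (by exact_mod_cast le_trans (Nat.le_add_right i s) h2)
  have hr2 : res N ((i : ℤ) + m) = ((i + s : ℕ) : ℤ) := by
    refine res_uniq hN (by push_cast; omega) (by exact_mod_cast h2) ?_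
    refine ⟨-(m / (N : ℤ)), ?_⟩
    push_cast
    linarith
  have hl := lvl_spec (N := N) (i : ℤ) m
  rw [hr1, hr2] at hl
  apply mul_left_cancel₀ hNe
  rw [hl, hdm]
  push_cast
  ring

lemma lvl_high (hN : 0 < N) {m : ℤ} {s i : ℕ} (hs : (s : ℤ) = m % (N : ℤ))
    (hsN : s ≤ N) (h1 : N + 1 ≤ i + s) (h2 : i ≤ N) :
    lvl N (i : ℤ) m = m / (N : ℤ) + 1 := by
  have hNe : ((N : ℤ)) ≠ 0 := by exact_mod_cast hN.ne'
  have hdm : (N : ℤ) * (m / (N : ℤ)) = m - s := by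
    have := Int.mul_ediv_add_emod m (N : ℤ); linarith
  have hi1 : 1 ≤ i := by omega
  have hr1 : res N (i : ℤ) = (i : ℤ) := res_eq_self (by exact_mod_cast hi1) (by exact_mod_cast h2)
  have hr2 : res N ((i : ℤ) + m) = ((i + s - N : ℕ) : ℤ) := by
    refine res_uniq hN (by push_cast [Nat.cast_sub (by omega : N ≤ i + s)]; omega)
      (by push_cast [Nat.cast_sub (by omega : N ≤ i + s)]; omega) ?_
    refine ⟨-(m / (N : ℤ)) - 1, ?_⟩
    push_cast [Nat.cast_sub (by omega : N ≤ i + s)]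
    linarith
  have hl := lvl_spec (N := N) (i : ℤ) m
  rw [hr1, hr2] at hl
  apply mul_left_cancel₀ hNe
  rw [hl]
  push_cast [Nat.cast_sub (by omega : N ≤ i + s)]
  linarith

lemma geom_zero (hN : 0 < N) (ω : ℂ)
    (hper : ∀ a b : ℤ, (N : ℤ) ∣ a - b → ω ^ a = ω ^ b)
    (ν : ℤ) (hν : ω ^ ν ≠ 1) :
    ∑ i ∈ Finset.Icc 1 N, ω ^ (ν * ((i : ℤ) - 1)) = 0 := by
  rw [← Finset.Ico_add_one_right_eq_Icc, Finset.sum_Ico_eq_sum_range]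
  have he : ∀ k : ℕ, ω ^ (ν * (((1 + k : ℕ) : ℤ) - 1)) = (ω ^ ν) ^ k := by
    intro k
    push_cast
    rw [show ν * (1 + (k : ℤ) - 1) = ν * k by ring, zpow_mul, zpow_natCast]
  rw [Finset.sum_congr rfl fun k _ => he k, geom_sum_eq hν]
  have h1 : (ω ^ ν) ^ (N + 1 - 1) = 1 := by
    rw [show N + 1 - 1 = N from rfl, ← zpow_natCast (ω ^ ν) N, ← zpow_mul,
      hper (ν * (N : ℤ)) 0 ⟨ν, by ring⟩, zpow_zero]
  rw [h1, sub_self, zero_div]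

lemma geom_tail (hN : 0 < N) (ω : ℂ) (hω0 : ω ≠ 0)
    (hper : ∀ a b : ℤ, (N : ℤ) ∣ a - b → ω ^ a = ω ^ b)
    (ν : ℤ) (hν : ω ^ ν ≠ 1) (n : ℤ) {s : ℕ} (hs : (s : ℤ) = n % (N : ℤ)) (hsN : s ≤ N) :
    ∑ i ∈ Finset.Icc (N - s + 1) N, ω ^ (ν * ((i : ℤ) - 1))
      = (ω ^ (-(ν * n)) - 1) / (1 - ω ^ ν) := by
  have hNe : ((N : ℤ)) ≠ 0 := by exact_mod_cast hN.ne'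
  have hdm : (N : ℤ) * (n / (N : ℤ)) = n - s := by
    have := Int.mul_ediv_add_emod n (N : ℤ); linarith
  rw [← Finset.Ico_add_one_right_eq_Icc, Finset.sum_Ico_eq_sum_range,
    show N + 1 - (N - s + 1) = s by omega]
  have he : ∀ k : ℕ, ω ^ (ν * (((N - s + 1 + k : ℕ) : ℤ) - 1))
      = ω ^ (ν * (((N : ℤ) - s))) * (ω ^ ν) ^ k := by
    intro k
    push_cast [Nat.cast_sub hsN]
    rw [show ν * ((N : ℤ) - s + 1 + k - 1) = ν * ((N : ℤ) - s) + ν * k by ring,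
      zpow_add₀ hω0, zpow_mul ω ν (k : ℤ), zpow_natCast]
  rw [Finset.sum_congr rfl fun k _ => he k, ← Finset.mul_sum, geom_sum_eq hν]
  have hc1 : ω ^ (ν * ((N : ℤ) - s)) * (ω ^ ν) ^ s = 1 := by
    rw [← zpow_natCast (ω ^ ν) s, ← zpow_mul, ← zpow_add₀ hω0,
      hper (ν * ((N : ℤ) - s) + ν * s) 0 ⟨ν, by ring⟩, zpow_zero]
  have hc2 : ω ^ (ν * ((N : ℤ) - s)) = ω ^ (-(ν * n)) := by
    refine hper _ _ ⟨ν * (1 + n / (N : ℤ)), ?_⟩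
    linear_combination (-ν) * hdm
  have hz1 : ω ^ ν - 1 ≠ 0 := sub_ne_zero.mpr hν
  have hz2 : (1 : ℂ) - ω ^ ν ≠ 0 := sub_ne_zero.mpr fun h => hν h.symm
  rw [mul_div_assoc', div_eq_div_iff hz1 hz2, ← hc2]
  linear_combination (1 - ω ^ ν) * hc1

lemma central_sum (hN : 0 < N) (ω : ℂ) (hω0 : ω ≠ 0)
    (hper : ∀ a b : ℤ, (N : ℤ) ∣ a - b → ω ^ a = ω ^ b)
    (ν : ℤ) (hν : ω ^ ν ≠ 1) (n : ℤ) (hn : n % (N : ℤ) ≠ 0) :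
    ∑ i ∈ Finset.Icc 1 N, ω ^ (ν * ((i : ℤ) - 1)) * ((lvl N (i : ℤ) n : ℤ) : ℂ)
      = (ω ^ (-(ν * n)) - 1) / (1 - ω ^ ν) := by
  have h0 : (0 : ℤ) < (N : ℤ) := by exact_mod_cast hN
  have hmod1 := Int.emod_nonneg n h0.ne'
  have hmod2 := Int.emod_lt_of_pos n h0
  set s := (n % (N : ℤ)).toNat with hsdef
  have hs : (s : ℤ) = n % (N : ℤ) := Int.toNat_of_nonneg hmod1
  have hsN : s ≤ N := by omega
  have hq : ∀ i ∈ Finset.Icc 1 (N - s),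
      ω ^ (ν * ((i : ℤ) - 1)) * ((lvl N (i : ℤ) n : ℤ) : ℂ)
        = ω ^ (ν * ((i : ℤ) - 1)) * ((n / (N : ℤ) : ℤ) : ℂ) := by
    intro i hi
    rw [Finset.mem_Icc] at hi
    rw [lvl_low hN hs hi.1 (by omega)]
  have hq2 : ∀ i ∈ Finset.Icc (N - s + 1) N,
      ω ^ (ν * ((i : ℤ) - 1)) * ((lvl N (i : ℤ) n : ℤ) : ℂ)
        = ω ^ (ν * ((i : ℤ) - 1)) * ((n / (N : ℤ) : ℤ) : ℂ)
          + ω ^ (ν * ((i : ℤ) - 1)) := by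
    intro i hi
    rw [Finset.mem_Icc] at hi
    rw [lvl_high hN hs hsN (by omega) hi.2]
    push_cast
    ring
  rw [Icc_split (fun i => ω ^ (ν * ((i : ℤ) - 1)) * ((lvl N (i : ℤ) n : ℤ) : ℂ))
    (show N - s ≤ N by omega), Finset.sum_congr rfl hq, Finset.sum_congr rfl hq2,
    Finset.sum_add_distrib]
  have hsplit := Icc_split (fun i => ω ^ (ν * ((i : ℤ) - 1)) * ((n / (N : ℤ) : ℤ) : ℂ))
    (show N - s ≤ N by omega)
  rw [← add_assoc, ← hsplit, ← Finset.sum_mul, geom_zero hN ω hper ν hν, zero_mul, zero_add]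
  exact geom_tail hN ω hω0 hper ν hν n hs hsN

end Central

section Sums

variable {L : Type*} [LieRing L] [LieAlgebra ℂ L]

lemma lie_sum' {α : Type*} (x : L) (s : Finset α) (f : α → L) :
    ⁅x, ∑ i ∈ s, f i⁆ = ∑ i ∈ s, ⁅x, f i⁆ :=
  map_sum (AddMonoidHom.mk' (fun y => ⁅x, y⁆) (lie_add x)) f s

lemma sum_lie' {α : Type*} (x : L) (s : Finset α) (f : α → L) :
    ⁅∑ i ∈ s, f i, x⁆ = ∑ i ∈ s, ⁅f i, x⁆ :=
  map_sum (AddMonoidHom.mk' (fun y => ⁅y, x⁆) (fun a b => add_lie a b x)) f s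

end Sums

end BetaXAux

open BetaXAux in
/-- The Heisenberg action on the principal currents of `ĝl_N`:
`[β_n, x^{(ν)}_m] = (1 - ω^{-νn}) x^{(ν)}_{n+m}` for `n ≢ 0 mod N` and `1 ≤ ν ≤ N-1`. -/
theorem beta_x_comm {L : Type*} [LieRing L] [LieAlgebra ℂ L]
    (N : ℕ) (hN : 2 ≤ N) (ω : ℂ) (hω : ω = Complex.exp (2 * Real.pi * Complex.I / N))
    (E : ℕ → ℕ → ℤ → L) (K : L)
    (hcent : ∀ x : L, ⁅K, x⁆ = 0)
    (hbrak : ∀ i j i' j' : ℕ, 1 ≤ i → i ≤ N → 1 ≤ j → j ≤ N →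
      1 ≤ i' → i' ≤ N → 1 ≤ j' → j' ≤ N → ∀ n m : ℤ,
      ⁅E i j n, E i' j' m⁆ =
        (if j = i' then E i j' (n + m) else 0) - (if i = j' then E i' j (n + m) else 0) +
          (if i = j' ∧ j = i' ∧ n + m = 0 then (n : ℂ) • K else 0))
    (n m : ℤ) (hn : n % (N : ℤ) ≠ 0) (ν : ℤ) (hν1 : 1 ≤ ν) (hν2 : ν ≤ (N : ℤ) - 1) :
    ⁅betaEl N E n, xEl N ω E K ν m⁆ = (1 - ω ^ (-(ν * n))) • xEl N ω E K ν (n + m) := by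
  classical
  have hN0 : 0 < N := by omega
  have h0 : (0 : ℤ) < (N : ℤ) := by exact_mod_cast hN0
  have hprim : IsPrimitiveRoot ω N := hω ▸ Complex.isPrimitiveRoot_exp N (by omega)
  have hω0 : ω ≠ 0 := hprim.ne_zero (by omega)
  have hper : ∀ a b : ℤ, (N : ℤ) ∣ a - b → ω ^ a = ω ^ b := by
    intro a b hd
    have h1 : ω ^ (a - b) = 1 := (hprim.zpow_eq_one_iff_dvd (a - b)).2 hd
    rw [show a = b + (a - b) by ring, zpow_add₀ hω0, h1, mul_one]
  have hν : ω ^ ν ≠ 1 := by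
    intro h
    have hdvd := (hprim.zpow_eq_one_iff_dvd ν).1 h
    have := Int.le_of_dvd (by omega) hdvd
    omega
  have hKr : ∀ x : L, ⁅x, K⁆ = 0 := fun x => by rw [← lie_skew, hcent, neg_zero]
  rw [beta_rep hN0 E n, x_rep hN ω hω0 hper E K ν hν m,
    x_rep hN ω hω0 hper E K ν hν (n + m)]
  rw [lie_sub]
  have hδ : ⁅∑ i ∈ Finset.Icc 1 N, Xg N E (i : ℤ) n,
      (if m = 0 then (1 / (1 - ω ^ ν)) • K else 0 : L)⁆ = 0 := by
    split_ifs
    · rw [lie_smul, hKr, smul_zero]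
    · exact lie_zero _
  rw [hδ, sub_zero, sum_lie']
  have hexp : ∀ i ∈ Finset.Icc 1 N,
      ⁅Xg N E (i : ℤ) n,
        ∑ j ∈ Finset.Icc 1 N, ω ^ (ν * ((j : ℤ) + m - 1)) • Xg N E (j : ℤ) m⁆
      = (∑ j ∈ Finset.Icc 1 N, (if (N : ℤ) ∣ (j : ℤ) - ((i : ℤ) + n)
            then ω ^ (ν * ((j : ℤ) + m - 1)) • Xg N E (i : ℤ) (n + m) else 0))
        - (∑ j ∈ Finset.Icc 1 N, (if (N : ℤ) ∣ (i : ℤ) - ((j : ℤ) + m)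
            then ω ^ (ν * ((j : ℤ) + m - 1)) • Xg N E (j : ℤ) (n + m) else 0))
        + (∑ j ∈ Finset.Icc 1 N, (if ((N : ℤ) ∣ (i : ℤ) - ((j : ℤ) + m)) ∧
              ((N : ℤ) ∣ (j : ℤ) - ((i : ℤ) + n)) ∧ n + m = 0
            then ω ^ (ν * ((j : ℤ) + m - 1)) • ((lvl N (i : ℤ) n : ℤ) : ℂ) • K else 0)) := by
    intro i _
    rw [lie_sum', ← Finset.sum_sub_distrib, ← Finset.sum_add_distrib]
    refine Finset.sum_congr rfl fun j _ => ?_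
    rw [lie_smul, Xg_brak N hN0 E K hbrak (i : ℤ) (j : ℤ) n m]
    simp only [smul_add, smul_sub, smul_ite, smul_zero]
  rw [Finset.sum_congr rfl hexp, Finset.sum_add_distrib, Finset.sum_sub_distrib]
  have hD1 : ∑ i ∈ Finset.Icc 1 N, (∑ j ∈ Finset.Icc 1 N,
        (if (N : ℤ) ∣ (j : ℤ) - ((i : ℤ) + n)
          then ω ^ (ν * ((j : ℤ) + m - 1)) • Xg N E (i : ℤ) (n + m) else 0))
      = ∑ i ∈ Finset.Icc 1 N, ω ^ (ν * ((i : ℤ) + (n + m) - 1)) • Xg N E (i : ℤ) (n + m) := by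
    refine Finset.sum_congr rfl fun i _ => ?_
    rw [collapse hN0 ((i : ℤ) + n)
      (fun j => ω ^ (ν * ((j : ℤ) + m - 1)) • Xg N E (i : ℤ) (n + m))]
    have hb := res_bounds (N := N) hN0 ((i : ℤ) + n)
    have hcast : (((res N ((i : ℤ) + n)).toNat : ℤ)) = res N ((i : ℤ) + n) :=
      Int.toNat_of_nonneg (by omega)
    obtain ⟨c0, hc0⟩ := res_dvd (N := N) ((i : ℤ) + n)
    simp only [hcast]
    congr 1
    exact hper _ _ ⟨-(ν * c0), by linear_combination (-ν) * hc0⟩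
  have hD2 : ∑ i ∈ Finset.Icc 1 N, (∑ j ∈ Finset.Icc 1 N,
        (if (N : ℤ) ∣ (i : ℤ) - ((j : ℤ) + m)
          then ω ^ (ν * ((j : ℤ) + m - 1)) • Xg N E (j : ℤ) (n + m) else 0))
      = ∑ j ∈ Finset.Icc 1 N, ω ^ (ν * ((j : ℤ) + m - 1)) • Xg N E (j : ℤ) (n + m) := by
    rw [Finset.sum_comm]
    refine Finset.sum_congr rfl fun j _ => ?_
    exact collapse hN0 ((j : ℤ) + m)
      (fun _ => ω ^ (ν * ((j : ℤ) + m - 1)) • Xg N E (j : ℤ) (n + m))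
  have hD3 : ∑ i ∈ Finset.Icc 1 N, (∑ j ∈ Finset.Icc 1 N,
        (if ((N : ℤ) ∣ (i : ℤ) - ((j : ℤ) + m)) ∧
            ((N : ℤ) ∣ (j : ℤ) - ((i : ℤ) + n)) ∧ n + m = 0
          then ω ^ (ν * ((j : ℤ) + m - 1)) • ((lvl N (i : ℤ) n : ℤ) : ℂ) • K else 0))
      = -((1 - ω ^ (-(ν * n))) • (if n + m = 0 then (1 / (1 - ω ^ ν)) • K else 0)) := by
    by_cases hnm : n + m = 0
    · rw [if_pos hnm]
      have hstep : ∀ i ∈ Finset.Icc 1 N, (∑ j ∈ Finset.Icc 1 N,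
          (if ((N : ℤ) ∣ (i : ℤ) - ((j : ℤ) + m)) ∧
              ((N : ℤ) ∣ (j : ℤ) - ((i : ℤ) + n)) ∧ n + m = 0
            then ω ^ (ν * ((j : ℤ) + m - 1)) • ((lvl N (i : ℤ) n : ℤ) : ℂ) • K else 0))
          = (ω ^ (ν * ((i : ℤ) - 1)) * ((lvl N (i : ℤ) n : ℤ) : ℂ)) • K := by
        intro i _
        have hcond : ∀ j : ℕ, (((N : ℤ) ∣ (i : ℤ) - ((j : ℤ) + m)) ∧
            ((N : ℤ) ∣ (j : ℤ) - ((i : ℤ) + n)) ∧ n + m = 0)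
            ↔ ((N : ℤ) ∣ (j : ℤ) - ((i : ℤ) + n)) := by
          intro j
          constructor
          · exact fun h => h.2.1
          · intro h
            refine ⟨?_, h, hnm⟩
            obtain ⟨c, hc⟩ := h
            exact ⟨-c, by linarith⟩
        rw [Finset.sum_congr rfl fun j _ => if_congr (hcond j) rfl rfl,
          collapse hN0 ((i : ℤ) + n)
            (fun j => ω ^ (ν * ((j : ℤ) + m - 1)) • ((lvl N (i : ℤ) n : ℤ) : ℂ) • K)]
        have hb := res_bounds (N := N) hN0 ((i : ℤ) + n)
        have hcast : (((res N ((i : ℤ) + n)).toNat : ℤ)) = res N ((i : ℤ) + n) :=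
          Int.toNat_of_nonneg (by omega)
        obtain ⟨c0, hc0⟩ := res_dvd (N := N) ((i : ℤ) + n)
        simp only [hcast, smul_smul]
        congr 2
        exact hper _ _ ⟨-(ν * c0), by linear_combination (-ν) * hc0 + ν * hnm⟩
      rw [Finset.sum_congr rfl hstep, ← Finset.sum_smul,
        central_sum hN0 ω hω0 hper ν hν n hn, smul_smul, ← neg_smul]
      congr 1
      have hz2 : (1 : ℂ) - ω ^ ν ≠ 0 := sub_ne_zero.mpr fun h => hν h.symm
      field_simp
      ring
    · rw [if_neg hnm, smul_zero, neg_zero]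
      refine Finset.sum_eq_zero fun i _ => Finset.sum_eq_zero fun j _ => ?_
      rw [if_neg (fun hc => hnm hc.2.2)]
  rw [hD1, hD2, hD3, smul_sub, sub_eq_add_neg ((1 - ω ^ (-(ν * n))) •
    (∑ i ∈ Finset.Icc 1 N, ω ^ (ν * ((i : ℤ) + (n + m) - 1)) • Xg N E (i : ℤ) (n + m))) _]
  congr 1
  rw [← Finset.sum_sub_distrib, Finset.smul_sum]
  refine Finset.sum_congr rfl fun i _ => ?_
  rw [← sub_smul, smul_smul]
  congr 1
  have hkey : ω ^ (-(ν * n)) * ω ^ (ν * ((i : ℤ) + (n + m) - 1)) = ω ^ (ν * ((i : ℤ) + m - 1)) := by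
    rw [← zpow_add₀ hω0, show -(ν * n) + ν * ((i : ℤ) + (n + m) - 1) = ν * ((i : ℤ) + m - 1) by ring]
  rw [sub_mul, one_mul, hkey]
end
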